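/- arXiv:1906.04776 — 4 statements merged into one kernel-verified Lean document; each statement's English description precedes it below -/
import Mathlib

section
/- Let b = ((b_{st}))_{1≤s,t≤K} be a symmetric K×K matrix of nonnegative integers satisfying 2·b_{ss} + Σ_{t≠s} b_{st} = N_s for every s ∈ {1,…,K}. Then the number of labelings L : {1,…,N} → {1,…,K} that assign label s to exactly N_s indices for every s and whose count matrix equals b (i.e., a_{st}(L) = b_{st} for all 1 ≤ s ≤ t ≤ K) is exactly 2^{Σ_{1≤s<t≤K} b_{st}} · I! / Π_{1≤s≤t≤K} (b_{st}!). -/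
open Finset Filter MeasureTheory ProbabilityTheory Topology

namespace Crossmatch

/-- First endpoint (index `2j`, i.e., the paper's `2j-1` in 1-based indexing) of the `j`-th
matched pair in the fixed perfect matching on `{1, …, 2I}`. -/
def ep1 {I : ℕ} (j : Fin I) : Fin (2 * I) := ⟨2 * j.val, by have := j.isLt; omega⟩

/-- Second endpoint (index `2j+1`, i.e., the paper's `2j`) of the `j`-th matched pair. -/
def ep2 {I : ℕ} (j : Fin I) : Fin (2 * I) := ⟨2 * j.val + 1, by have := j.isLt; omega⟩

lemma pair_finset_eq {α : Type*} [DecidableEq α] {x y s t : α} :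
    ({x, y} : Finset α) = ({s, t} : Finset α) ↔ (x = s ∧ y = t) ∨ (x = t ∧ y = s) := by
  rw [← Finset.coe_inj]
  simp only [Finset.coe_insert, Finset.coe_singleton]
  exact Set.pair_eq_pair_iff

lemma cnt_cons_card {α : Type*} [DecidableEq α] {n : ℕ} (a : α) (g : Fin n → α) (t : α) :
    (univ.filter fun i : Fin (n+1) => (Fin.cons a g : Fin (n+1) → α) i = t).card
      = (if a = t then 1 else 0) + (univ.filter fun i : Fin n => g i = t).card := by
  rw [Finset.card_filter, Fin.sum_univ_succ, Finset.card_filter]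
  simp

lemma countA {α : Type*} [Fintype α] [DecidableEq α] :
    ∀ (I : ℕ) (m : α → ℕ), (∑ a, m a = I) →
      ((univ.filter fun f : Fin I → α =>
          ∀ a, (univ.filter fun j => f j = a).card = m a).card)
        * ∏ a, (m a).factorial = I.factorial := by
  intro I
  induction I with
  | zero =>
    intro m hm
    have hz : ∀ a : α, m a = 0 := fun a =>
      (Finset.sum_eq_zero_iff).mp hm a (mem_univ a)
    have : (univ.filter fun f : Fin 0 → α =>
        ∀ a, (univ.filter fun j => f j = a).card = m a) = univ := by
      apply Finset.filter_true_of_mem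
      intro f _ a
      simp [hz a]
    rw [this]
    simp [hz, Finset.card_univ]
  | succ n ih =>
    intro m hm
    have key : ∀ a : α, ((univ.filter fun f : Fin (n+1) → α =>
          ∀ a, (univ.filter fun j => f j = a).card = m a).filter fun f => f 0 = a).card
          * ∏ t, (m t).factorial = m a * n.factorial := by
      intro a
      by_cases ha : m a = 0
      · have hempty : ((univ.filter fun f : Fin (n+1) → α =>
            ∀ a, (univ.filter fun j => f j = a).card = m a).filter fun f => f 0 = a) = ∅ := by
          rw [Finset.filter_eq_empty_iff]
          rintro f hf hfa
          rw [Finset.mem_filter] at hf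
          have h0 := hf.2 a
          have hpos : 0 < (univ.filter fun j : Fin (n+1) => f j = a).card :=
            Finset.card_pos.mpr ⟨0, by simp [hfa]⟩
          rw [h0, ha] at hpos
          exact absurd hpos (lt_irrefl 0)
        rw [hempty]
        simp [ha]
      · obtain ⟨m', hm'a, herase'⟩ : ∃ m' : α → ℕ, m' a = m a - 1 ∧ ∀ t, t ≠ a → m' t = m t :=
          ⟨fun t => if t = a then m a - 1 else m t, by simp, fun t ht => by simp [ht]⟩
        have hma : 1 ≤ m a := Nat.one_le_iff_ne_zero.mpr ha
        have herase : ∀ t ∈ univ.erase a, m' t = m t := fun t ht =>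
          herase' t (Finset.mem_erase.mp ht).1
        have hsum' : ∑ t, m' t = n := by
          have h1 : m a + ∑ t ∈ univ.erase a, m t = ∑ t, m t :=
            Finset.add_sum_erase univ m (mem_univ a)
          have h2 : m' a + ∑ t ∈ univ.erase a, m' t = ∑ t, m' t :=
            Finset.add_sum_erase univ m' (mem_univ a)
          have h3 : ∑ t ∈ univ.erase a, m' t = ∑ t ∈ univ.erase a, m t :=
            Finset.sum_congr rfl herase
          omega
        have hbij : ((univ.filter fun f : Fin (n+1) → α =>
              ∀ a, (univ.filter fun j => f j = a).card = m a).filter fun f => f 0 = a).card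
            = (univ.filter fun g : Fin n → α =>
                ∀ t, (univ.filter fun j => g j = t).card = m' t).card := by
          apply Finset.card_bij' (fun f _ => Fin.tail f) (fun g _ => Fin.cons a g)
          case hi =>
            intro f hf
            rw [Finset.mem_filter] at hf
            obtain ⟨hfS, hf0⟩ := hf
            rw [Finset.mem_filter] at hfS
            rw [Finset.mem_filter]
            refine ⟨mem_univ _, fun t => ?_⟩
            have hcnt := hfS.2 t
            have hft : f = Fin.cons a (Fin.tail f) := by
              rw [← hf0]; exact (Fin.cons_self_tail f).symm
            rw [hft, cnt_cons_card] at hcnt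
            by_cases hta : t = a
            · subst hta
              rw [if_pos rfl] at hcnt
              rw [hm'a]
              omega
            · rw [if_neg (Ne.symm hta)] at hcnt
              rw [herase' t hta]
              omega
          case hj =>
            intro g hg
            rw [Finset.mem_filter] at hg
            rw [Finset.mem_filter]
            refine ⟨?_, by simp⟩
            rw [Finset.mem_filter]
            refine ⟨mem_univ _, fun t => ?_⟩
            rw [cnt_cons_card, hg.2 t]
            by_cases hta : t = a
            · subst hta
              rw [if_pos rfl, hm'a]
              omega
            · rw [if_neg (Ne.symm hta), herase' t hta]
              omega
          case left_inv =>
            intro f hf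
            rw [Finset.mem_filter] at hf
            rw [← hf.2]
            exact Fin.cons_self_tail f
          case right_inv =>
            intro g _
            simp
        have hprod : ∏ t, (m t).factorial = m a * ∏ t, (m' t).factorial := by
          have e1 : ∏ t, (m t).factorial
              = (m a).factorial * ∏ t ∈ univ.erase a, (m t).factorial :=
            (Finset.mul_prod_erase univ _ (mem_univ a)).symm
          have e2 : ∏ t, (m' t).factorial
              = (m' a).factorial * ∏ t ∈ univ.erase a, (m' t).factorial :=
            (Finset.mul_prod_erase univ _ (mem_univ a)).symm
          have e3 : ∏ t ∈ univ.erase a, (m' t).factorial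
              = ∏ t ∈ univ.erase a, (m t).factorial :=
            Finset.prod_congr rfl (fun t ht => by rw [herase t ht])
          have e4 : (m a).factorial = m a * (m' a).factorial := by
            rw [hm'a]
            obtain ⟨k, hk⟩ : ∃ k, m a = k + 1 :=
              ⟨m a - 1, (Nat.succ_pred_eq_of_pos hma).symm⟩
            rw [hk]
            simp [Nat.factorial_succ]
          rw [e1, e2, e3, e4, mul_assoc]
        rw [hbij, hprod, ← mul_assoc, mul_comm _ (m a), mul_assoc, ih m' hsum']
    have hcard : (univ.filter fun f : Fin (n+1) → α =>
          ∀ a, (univ.filter fun j => f j = a).card = m a).card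
        = ∑ a : α, ((univ.filter fun f : Fin (n+1) → α =>
            ∀ a, (univ.filter fun j => f j = a).card = m a).filter fun f => f 0 = a).card :=
      Finset.card_eq_sum_card_fiberwise (fun f _ => mem_univ (f 0))
    calc (univ.filter fun f : Fin (n+1) → α =>
          ∀ a, (univ.filter fun j => f j = a).card = m a).card * ∏ t, (m t).factorial
        = ∑ a : α, ((univ.filter fun f : Fin (n+1) → α =>
            ∀ a, (univ.filter fun j => f j = a).card = m a).filter fun f => f 0 = a).card
              * ∏ t, (m t).factorial := by
          rw [hcard, Finset.sum_mul]
      _ = ∑ a : α, m a * n.factorial := Finset.sum_congr rfl (fun a _ => key a)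
      _ = (∑ a : α, m a) * n.factorial := by rw [Finset.sum_mul]
      _ = (n+1).factorial := by rw [hm, Nat.factorial_succ]

lemma countB {γ α : Type*} [Fintype γ] [Fintype α] [DecidableEq γ] [DecidableEq α]
    (π : γ → α) (I : ℕ) (m : α → ℕ) :
    (univ.filter fun f : Fin I → γ =>
        ∀ a, (univ.filter fun j => π (f j) = a).card = m a).card
      = (∏ a, ((univ.filter fun x => π x = a).card) ^ m a)
        * (univ.filter fun g : Fin I → α =>
            ∀ a, (univ.filter fun j => g j = a).card = m a).card := by
  have hmaps : ∀ f ∈ (univ.filter fun f : Fin I → γ =>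
      ∀ a, (univ.filter fun j => π (f j) = a).card = m a),
      (fun j => π (f j)) ∈ (univ.filter fun g : Fin I → α =>
        ∀ a, (univ.filter fun j => g j = a).card = m a) := by
    intro f hf
    rw [Finset.mem_filter] at hf ⊢
    exact ⟨mem_univ _, hf.2⟩
  rw [Finset.card_eq_sum_card_fiberwise hmaps]
  have hfib : ∀ g ∈ (univ.filter fun g : Fin I → α =>
      ∀ a, (univ.filter fun j => g j = a).card = m a),
      ((univ.filter fun f : Fin I → γ =>
        ∀ a, (univ.filter fun j => π (f j) = a).card = m a).filter
          fun f => (fun j => π (f j)) = g).card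
      = ∏ a, ((univ.filter fun x => π x = a).card) ^ m a := by
    intro g hg
    rw [Finset.mem_filter] at hg
    have hset : ((univ.filter fun f : Fin I → γ =>
        ∀ a, (univ.filter fun j => π (f j) = a).card = m a).filter
          fun f => (fun j => π (f j)) = g)
        = Fintype.piFinset (fun j => univ.filter fun x => π x = g j) := by
      ext f
      simp only [Finset.mem_filter, Fintype.mem_piFinset, mem_univ, true_and]
      constructor
      · rintro ⟨_, hfg⟩ j
        simp [congrFun hfg j]
      · intro h
        have hfg : (fun j => π (f j)) = g := funext (fun j => by simpa using h j)
        refine ⟨fun a => ?_, hfg⟩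
        have hfe : (univ.filter fun j => π (f j) = a) = (univ.filter fun j => g j = a) :=
          Finset.filter_congr (fun j _ => by rw [h j])
        rw [hfe]
        exact hg.2 a
    rw [hset, Fintype.card_piFinset]
    rw [← Finset.prod_fiberwise_of_maps_to (g := g) (fun j _ => mem_univ (g j))
        (fun j => (univ.filter fun x => π x = g j).card)]
    apply Finset.prod_congr rfl
    intro a _
    rw [Finset.prod_congr rfl (fun j hj => by
      rw [(Finset.mem_filter.mp hj).2]), Finset.prod_const, hg.2 a]
  rw [Finset.sum_congr rfl hfib, Finset.sum_const, smul_eq_mul, mul_comm]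

def sortp {K : ℕ} (q : Fin K × Fin K) : {q : Fin K × Fin K // q.1 ≤ q.2} :=
  if h : q.1 ≤ q.2 then ⟨q, h⟩ else ⟨(q.2, q.1), le_of_not_ge h⟩

lemma sortp_eq_mk_iff {K : ℕ} {x y s t : Fin K} (hst : s ≤ t) :
    sortp (x, y) = ⟨(s, t), hst⟩ ↔ ((x = s ∧ y = t) ∨ (x = t ∧ y = s)) := by
  rw [sortp]
  by_cases h : x ≤ y
  · rw [dif_pos (show (x, y).1 ≤ (x, y).2 from h)]
    simp only [Subtype.mk.injEq, Prod.mk.injEq, Fin.ext_iff]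
    rw [Fin.le_def] at h hst
    omega
  · rw [dif_neg (show ¬((x, y).1 ≤ (x, y).2) from h)]
    simp only [Subtype.mk.injEq, Prod.mk.injEq, Fin.ext_iff]
    rw [Fin.le_def] at h hst
    omega

lemma sortp_fiber_card {K : ℕ} (s t : Fin K) (hst : s ≤ t) :
    (univ.filter fun x : Fin K × Fin K => sortp x = ⟨(s, t), hst⟩).card
      = if s = t then 1 else 2 := by
  have hfe : (univ.filter fun x : Fin K × Fin K => sortp x = ⟨(s, t), hst⟩)
      = ({(s, t), (t, s)} : Finset (Fin K × Fin K)) := by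
    ext ⟨x, y⟩
    simp only [Finset.mem_filter, mem_univ, true_and, Finset.mem_insert,
      Finset.mem_singleton, Prod.mk.injEq, sortp_eq_mk_iff hst]
  rw [hfe]
  by_cases h : s = t
  · subst h; simp
  · rw [if_neg h, Finset.card_insert_of_notMem (by
      simp only [Finset.mem_singleton, Prod.mk.injEq]
      rintro ⟨rfl, -⟩
      exact h rfl), Finset.card_singleton]

lemma coord_count {K : ℕ} (q : Fin K × Fin K) (s : Fin K) :
    ((if q.1 = s then 1 else 0) + (if q.2 = s then 1 else 0) : ℕ)
      = (if (sortp q).1.1 = s then 1 else 0) + (if (sortp q).1.2 = s then 1 else 0) := by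
  rw [sortp]
  split_ifs <;> omega

def epair (I : ℕ) : Fin I × Fin 2 ≃ Fin (2 * I) where
  toFun p := ⟨2 * p.1.val + p.2.val, by have h1 := p.1.isLt; have h2 := p.2.isLt; omega⟩
  invFun i := (⟨i.val / 2, by have := i.isLt; omega⟩, ⟨i.val % 2, by omega⟩)
  left_inv p := by
    obtain ⟨⟨j, hj⟩, ⟨r, hr⟩⟩ := p
    simp only [Prod.mk.injEq]
    constructor <;> (apply Fin.ext; simp; omega)
  right_inv i := by
    apply Fin.ext
    simp
    omega

lemma epair_zero {I : ℕ} (j : Fin I) : epair I (j, 0) = ep1 j := by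
  apply Fin.ext; simp [epair, ep1]

lemma epair_one {I : ℕ} (j : Fin I) : epair I (j, 1) = ep2 j := by
  apply Fin.ext; simp [epair, ep2]

lemma sum_split {I : ℕ} (g : Fin (2 * I) → ℕ) :
    ∑ i, g i = ∑ j : Fin I, (g (ep1 j) + g (ep2 j)) := by
  rw [← Equiv.sum_comp (epair I) g, Fintype.sum_prod_type]
  refine Finset.sum_congr rfl fun j _ => ?_
  rw [Fin.sum_univ_two, epair_zero, epair_one]

def unpair {I K : ℕ} (f : Fin I → Fin K × Fin K) (i : Fin (2 * I)) : Fin K :=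
  if i.val % 2 = 0 then (f ⟨i.val / 2, by have := i.isLt; omega⟩).1
  else (f ⟨i.val / 2, by have := i.isLt; omega⟩).2

lemma unpair_ep1 {I K : ℕ} (f : Fin I → Fin K × Fin K) (j : Fin I) :
    unpair f (ep1 j) = (f j).1 := by
  have h1 : (ep1 j).val % 2 = 0 := by simp [ep1]
  rw [unpair, if_pos h1]
  congr 2
  apply Fin.ext
  simp only [ep1]
  omega

lemma unpair_ep2 {I K : ℕ} (f : Fin I → Fin K × Fin K) (j : Fin I) :
    unpair f (ep2 j) = (f j).2 := by
  have h1 : ¬((ep2 j).val % 2 = 0) := by simp [ep2]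
  rw [unpair, if_neg h1]
  congr 2
  apply Fin.ext
  simp only [ep2]
  omega

lemma pair_unpair {I K : ℕ} (L : Fin (2 * I) → Fin K) :
    unpair (fun j => (L (ep1 j), L (ep2 j))) = L := by
  funext i
  rw [unpair]
  split_ifs with h
  · show L (ep1 _) = L i
    congr 1
    apply Fin.ext
    simp only [ep1]
    omega
  · show L (ep2 _) = L i
    congr 1
    apply Fin.ext
    simp only [ep2]
    omega

lemma unpair_pair {I K : ℕ} (f : Fin I → Fin K × Fin K) :
    (fun j => (unpair f (ep1 j), unpair f (ep2 j))) = f := by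
  funext j
  rw [unpair_ep1, unpair_ep2]

lemma sum_w {K : ℕ} (b : Fin K → Fin K → ℕ) (hsymm : ∀ s t, b s t = b t s) (s : Fin K) :
    ∑ z : {q : Fin K × Fin K // q.1 ≤ q.2},
        ((if z.1.1 = s then 1 else 0) + (if z.1.2 = s then 1 else 0)) * b z.1.1 z.1.2
      = ∑ t, b s t + b s s := by
  rw [← Finset.sum_subtype (univ.filter fun q : Fin K × Fin K => q.1 ≤ q.2) (by simp)
      (fun q => ((if q.1 = s then 1 else 0) + (if q.2 = s then 1 else 0)) * b q.1 q.2)]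
  rw [Finset.sum_filter, Fintype.sum_prod_type]
  have key : ∀ u t : Fin K,
      (if u ≤ t then ((if u = s then 1 else 0) + (if t = s then 1 else 0)) * b u t else 0)
      = (if u = s then (if u ≤ t then b u t else 0) else 0)
        + (if t = s then (if u ≤ t then b u t else 0) else 0) := by
    intro u t
    split_ifs <;> ring
  rw [Finset.sum_congr rfl fun u _ => Finset.sum_congr rfl fun t _ => key u t]
  rw [Finset.sum_congr rfl fun u (_ : u ∈ univ) => Finset.sum_add_distrib]
  rw [Finset.sum_add_distrib]
  have p1 : ∑ u : Fin K, ∑ t : Fin K, (if u = s then (if u ≤ t then b u t else 0) else 0)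
      = ∑ t : Fin K, (if s ≤ t then b s t else 0) := by
    have : ∀ u : Fin K, ∑ t : Fin K, (if u = s then (if u ≤ t then b u t else 0) else 0)
        = (if u = s then ∑ t : Fin K, (if u ≤ t then b u t else 0) else 0) := by
      intro u
      split_ifs <;> simp
    rw [Finset.sum_congr rfl fun u _ => this u,
      Finset.sum_ite_eq' univ s (fun u => ∑ t : Fin K, (if u ≤ t then b u t else 0))]
    simp
  have p2 : ∑ u : Fin K, ∑ t : Fin K, (if t = s then (if u ≤ t then b u t else 0) else 0)
      = ∑ u : Fin K, (if u ≤ s then b s u else 0) := by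
    refine Finset.sum_congr rfl fun u _ => ?_
    rw [Finset.sum_ite_eq' univ s (fun t => if u ≤ t then b u t else 0)]
    simp [hsymm u s]
  rw [p1, p2]
  rw [← Finset.sum_add_distrib]
  have p3 : ∀ t : Fin K, ((if s ≤ t then b s t else 0) + (if t ≤ s then b s t else 0))
      = b s t + (if t = s then b s t else 0) := by
    intro t
    rcases lt_trichotomy s t with h | h | h
    · rw [if_pos h.le, if_neg (not_le.mpr h), if_neg (by intro he; exact absurd he.symm h.ne)]
    · subst h; simp
    · rw [if_neg (not_le.mpr h), if_pos h.le, if_neg (by intro he; exact absurd he h.ne)]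
      omega
  rw [Finset.sum_congr rfl fun t _ => p3 t, Finset.sum_add_distrib,
    Finset.sum_ite_eq' univ s (fun t => b s t)]
  simp




/-- The set of labelings `L : {1,…,2I} → {1,…,K}` assigning label `s` to exactly `Nc s`
indices, for every `s`. -/
def labelings (I K : ℕ) (Nc : Fin K → ℕ) : Finset (Fin (2 * I) → Fin K) :=
  univ.filter fun L => ∀ s : Fin K, (univ.filter fun i => L i = s).card = Nc s

/-- The count `a_{st}(L)`: the number of matched pairs `j` with `{L(2j-1), L(2j)} = {s,t}`.
For `s ≠ t` this is the cross-count; for `s = t` it is the pure count (both endpoints labeled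
`s`). -/
def crossCount (I K : ℕ) (L : Fin (2 * I) → Fin K) (s t : Fin K) : ℕ :=
  (univ.filter fun j : Fin I =>
    ({L (ep1 j), L (ep2 j)} : Finset (Fin K)) = ({s, t} : Finset (Fin K))).card

/-- Expectation of a real-valued statistic under a uniformly random labeling. -/
noncomputable def expct (I K : ℕ) (Nc : Fin K → ℕ)
    (X : (Fin (2 * I) → Fin K) → ℝ) : ℝ :=
  (∑ L ∈ labelings I K Nc, X L) / ((labelings I K Nc).card : ℝ)

open Classical in
/-- Probability of an event under a uniformly random labeling. -/
noncomputable def pr (I K : ℕ) (Nc : Fin K → ℕ)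
    (ev : (Fin (2 * I) → Fin K) → Prop) : ℝ :=
  (((labelings I K Nc).filter ev).card : ℝ) / ((labelings I K Nc).card : ℝ)

/-- Variance of a real-valued statistic under a uniformly random labeling. -/
noncomputable def variance (I K : ℕ) (Nc : Fin K → ℕ)
    (X : (Fin (2 * I) → Fin K) → ℝ) : ℝ :=
  expct I K Nc (fun L => (X L - expct I K Nc X) ^ 2)

/-- Covariance of two real-valued statistics under a uniformly random labeling. -/
noncomputable def covar (I K : ℕ) (Nc : Fin K → ℕ)
    (X Y : (Fin (2 * I) → Fin K) → ℝ) : ℝ :=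
  expct I K Nc (fun L => (X L - expct I K Nc X) * (Y L - expct I K Nc Y))

/-- The index set of (unordered) pairs `s < t`, indexing the cross-count vector. -/
abbrev Pairs (K : ℕ) := {q : Fin K × Fin K // q.1 < q.2}

/-- The covariance matrix of the cross-count vector `(a_{st})_{s<t}` under a uniformly
random labeling. -/
noncomputable def covMatrix (I K : ℕ) (Nc : Fin K → ℕ) :
    Matrix (Pairs K) (Pairs K) ℝ :=
  Matrix.of fun q r =>
    covar I K Nc (fun L => (crossCount I K L q.1.1 q.1.2 : ℝ))
      (fun L => (crossCount I K L r.1.1 r.1.2 : ℝ))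

/-- the number of labelings whose count matrix equals `b` is exactly
`2^{Σ_{s<t} b_{st}} · I! / Π_{s≤t} (b_{st})!`. -/
theorem stmt0 (K I : ℕ) (hK : 2 ≤ K) (hI : 1 ≤ I)
    (Nc : Fin K → ℕ) (hNpos : ∀ s, 0 < Nc s) (hNsum : ∑ s, Nc s = 2 * I)
    (b : Fin K → Fin K → ℕ) (hbsymm : ∀ s t, b s t = b t s)
    (hbrow : ∀ s : Fin K, 2 * b s s + ∑ t ∈ univ.erase s, b s t = Nc s) :
    ((((labelings I K Nc).filter fun L =>
        ∀ s t : Fin K, s ≤ t → crossCount I K L s t = b s t).card : ℚ))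
      = (2 : ℚ) ^ (∑ q ∈ univ.filter (fun q : Fin K × Fin K => q.1 < q.2), b q.1 q.2)
          * (I.factorial : ℚ)
        / ∏ q ∈ univ.filter (fun q : Fin K × Fin K => q.1 ≤ q.2),
            ((b q.1 q.2).factorial : ℚ) := by

  classical
  -- abbreviations
  have hNc : ∀ s : Fin K, ∑ t, b s t + b s s = Nc s := by
    intro s
    have hb := hbrow s
    have hsp : ∑ t, b s t = b s s + ∑ t ∈ univ.erase s, b s t :=
      (Finset.add_sum_erase univ (b s) (mem_univ s)).symm
    omega
  -- Step A : card of our set equals card of a set of pair-functions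
  have hAB : (((labelings I K Nc).filter fun L =>
        ∀ s t : Fin K, s ≤ t → crossCount I K L s t = b s t)).card
      = (univ.filter fun f : Fin I → Fin K × Fin K =>
          ∀ z : {q : Fin K × Fin K // q.1 ≤ q.2},
            (univ.filter fun j => sortp (f j) = z).card = b z.1.1 z.1.2).card := by
    apply Finset.card_bij' (fun L _ => fun j => (L (ep1 j), L (ep2 j))) (fun f _ => unpair f)
    case hi =>
      intro L hL
      rw [Finset.mem_filter] at hL
      rw [Finset.mem_filter]
      refine ⟨mem_univ _, ?_⟩
      rintro ⟨⟨s, t⟩, hst⟩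
      have hcc := hL.2 s t hst
      rw [← hcc]
      show (univ.filter fun j => sortp (L (ep1 j), L (ep2 j)) = ⟨(s, t), hst⟩).card
          = crossCount I K L s t
      unfold crossCount
      congr 1
      apply Finset.filter_congr
      intro j _
      rw [sortp_eq_mk_iff hst, pair_finset_eq]
    case hj =>
      intro f hf
      rw [Finset.mem_filter] at hf
      rw [Finset.mem_filter]
      constructor
      · -- membership in labelings
        rw [labelings, Finset.mem_filter]
        refine ⟨mem_univ _, ?_⟩
        intro s
        rw [Finset.card_filter, sum_split (fun i => if unpair f i = s then 1 else 0)]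
        have e1 : ∀ j : Fin I,
            ((if unpair f (ep1 j) = s then 1 else 0)
              + (if unpair f (ep2 j) = s then 1 else 0) : ℕ)
            = (if (sortp (f j)).1.1 = s then 1 else 0)
              + (if (sortp (f j)).1.2 = s then 1 else 0) := by
          intro j
          rw [unpair_ep1, unpair_ep2]
          exact coord_count (f j) s
        rw [Finset.sum_congr rfl fun j _ => e1 j]
        rw [← Finset.sum_fiberwise_of_maps_to (g := fun j : Fin I => sortp (f j))
            (t := (univ : Finset {q : Fin K × Fin K // q.1 ≤ q.2}))
            (fun j _ => mem_univ _)
            (fun j => ((if (sortp (f j)).1.1 = s then 1 else 0)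
              + (if (sortp (f j)).1.2 = s then 1 else 0) : ℕ))]
        have e2 : ∀ z : {q : Fin K × Fin K // q.1 ≤ q.2},
            ∑ j ∈ univ.filter (fun j : Fin I => sortp (f j) = z),
              ((if (sortp (f j)).1.1 = s then 1 else 0)
                + (if (sortp (f j)).1.2 = s then 1 else 0) : ℕ)
            = ((if z.1.1 = s then 1 else 0) + (if z.1.2 = s then 1 else 0)) * b z.1.1 z.1.2 := by
          intro z
          rw [Finset.sum_congr rfl (fun j hj => by
            rw [(Finset.mem_filter.mp hj).2])]
          rw [Finset.sum_const, (hf.2 z), smul_eq_mul, mul_comm]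
        rw [Finset.sum_congr rfl fun z _ => e2 z, sum_w b hbsymm s, hNc s]
      · -- cross counts
        intro s t hst
        rw [← hf.2 ⟨(s, t), hst⟩]
        unfold crossCount
        congr 1
        apply Finset.filter_congr
        intro j _
        rw [unpair_ep1, unpair_ep2]
        have hiff := sortp_eq_mk_iff (x := (f j).1) (y := (f j).2) hst
        rw [Prod.mk.eta] at hiff
        rw [pair_finset_eq, hiff]
    case left_inv =>
      intro L _
      exact pair_unpair L
    case right_inv =>
      intro f _
      exact unpair_pair f
  -- Step B : total mass
  have h2 : ∀ z : {q : Fin K × Fin K // q.1 ≤ q.2},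
      (∑ s : Fin K, ((if z.1.1 = s then 1 else 0) + (if z.1.2 = s then 1 else 0)) : ℕ) = 2 := by
    intro z
    rw [Finset.sum_add_distrib, Finset.sum_ite_eq univ z.1.1 (fun _ => 1),
      Finset.sum_ite_eq univ z.1.2 (fun _ => 1)]
    simp
  have hsum : ∑ z : {q : Fin K × Fin K // q.1 ≤ q.2}, b z.1.1 z.1.2 = I := by
    have hdouble : 2 * ∑ z : {q : Fin K × Fin K // q.1 ≤ q.2}, b z.1.1 z.1.2 = 2 * I := by
      calc 2 * ∑ z : {q : Fin K × Fin K // q.1 ≤ q.2}, b z.1.1 z.1.2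
          = ∑ z : {q : Fin K × Fin K // q.1 ≤ q.2}, 2 * b z.1.1 z.1.2 := by
            rw [Finset.mul_sum]
        _ = ∑ z : {q : Fin K × Fin K // q.1 ≤ q.2},
              (∑ s : Fin K, ((if z.1.1 = s then 1 else 0) + (if z.1.2 = s then 1 else 0)))
                * b z.1.1 z.1.2 := by
            refine Finset.sum_congr rfl fun z _ => ?_
            rw [h2 z]
        _ = ∑ z : {q : Fin K × Fin K // q.1 ≤ q.2}, ∑ s : Fin K,
              ((if z.1.1 = s then 1 else 0) + (if z.1.2 = s then 1 else 0)) * b z.1.1 z.1.2 := by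
            refine Finset.sum_congr rfl fun z _ => ?_
            rw [Finset.sum_mul]
        _ = ∑ s : Fin K, ∑ z : {q : Fin K × Fin K // q.1 ≤ q.2},
              ((if z.1.1 = s then 1 else 0) + (if z.1.2 = s then 1 else 0)) * b z.1.1 z.1.2 :=
            Finset.sum_comm
        _ = ∑ s : Fin K, (∑ t, b s t + b s s) :=
            Finset.sum_congr rfl fun s _ => sum_w b hbsymm s
        _ = ∑ s : Fin K, Nc s := Finset.sum_congr rfl fun s _ => hNc s
        _ = 2 * I := hNsum
    exact Nat.eq_of_mul_eq_mul_left (by norm_num) hdouble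
  -- Step C : counting
  have hB := countB (γ := Fin K × Fin K) (α := {q : Fin K × Fin K // q.1 ≤ q.2})
    sortp I (fun z => b z.1.1 z.1.2)
  have hA : (univ.filter fun g : Fin I → {q : Fin K × Fin K // q.1 ≤ q.2} =>
      ∀ a, (univ.filter fun j => g j = a).card = b a.1.1 a.1.2).card
      * ∏ a : {q : Fin K × Fin K // q.1 ≤ q.2}, (b a.1.1 a.1.2).factorial = I.factorial :=
    countA (α := {q : Fin K × Fin K // q.1 ≤ q.2}) I (fun z => b z.1.1 z.1.2) hsum
  -- Step D : fiber sizes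
  have hc : ∀ z : {q : Fin K × Fin K // q.1 ≤ q.2},
      (univ.filter fun x : Fin K × Fin K => sortp x = z).card
        = if z.1.1 = z.1.2 then 1 else 2 := by
    rintro ⟨⟨s, t⟩, hst⟩
    exact sortp_fiber_card s t hst
  have hpow : (∏ z : {q : Fin K × Fin K // q.1 ≤ q.2},
        ((univ.filter fun x : Fin K × Fin K => sortp x = z).card) ^ b z.1.1 z.1.2)
      = 2 ^ (∑ q ∈ univ.filter (fun q : Fin K × Fin K => q.1 < q.2), b q.1 q.2) := by
    have e1 : (∏ z : {q : Fin K × Fin K // q.1 ≤ q.2},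
          ((univ.filter fun x : Fin K × Fin K => sortp x = z).card) ^ b z.1.1 z.1.2)
        = ∏ z : {q : Fin K × Fin K // q.1 ≤ q.2},
            2 ^ (if z.1.1 = z.1.2 then 0 else b z.1.1 z.1.2) := by
      refine Finset.prod_congr rfl fun z _ => ?_
      rw [hc z]
      by_cases h : z.1.1 = z.1.2
      · rw [if_pos h, if_pos h]
        simp
      · rw [if_neg h, if_neg h]
    rw [e1, Finset.prod_pow_eq_pow_sum]
    congr 1
    rw [← Finset.sum_subtype (univ.filter fun q : Fin K × Fin K => q.1 ≤ q.2) (by simp)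
        (fun q => if q.1 = q.2 then 0 else b q.1 q.2)]
    rw [Finset.sum_filter, Finset.sum_filter]
    refine Finset.sum_congr rfl fun q _ => ?_
    rcases lt_trichotomy q.1 q.2 with h | h | h
    · rw [if_pos h.le, if_neg h.ne, if_pos h]
    · rw [if_pos h.le, if_pos h, if_neg (by rw [h]; exact lt_irrefl _)]
    · rw [if_neg (not_le.mpr h), if_neg (not_lt.mpr h.le)]
  -- Step E : factorial product
  have hfac : (∏ z : {q : Fin K × Fin K // q.1 ≤ q.2}, (b z.1.1 z.1.2).factorial)
      = ∏ q ∈ univ.filter (fun q : Fin K × Fin K => q.1 ≤ q.2), (b q.1 q.2).factorial := by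
    rw [Finset.prod_subtype (p := fun q : Fin K × Fin K => q.1 ≤ q.2)
      (univ.filter fun q : Fin K × Fin K => q.1 ≤ q.2) (by simp)
      (fun q => (b q.1 q.2).factorial)]
  -- Step F : conclude over ℚ
  have hnat : (((labelings I K Nc).filter fun L =>
        ∀ s t : Fin K, s ≤ t → crossCount I K L s t = b s t)).card
        * ∏ q ∈ univ.filter (fun q : Fin K × Fin K => q.1 ≤ q.2), (b q.1 q.2).factorial
      = 2 ^ (∑ q ∈ univ.filter (fun q : Fin K × Fin K => q.1 < q.2), b q.1 q.2)
        * I.factorial := by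
    rw [hAB, hB, hpow, ← hfac, mul_assoc, hA]
  have hFne : (∏ q ∈ univ.filter (fun q : Fin K × Fin K => q.1 ≤ q.2),
      ((b q.1 q.2).factorial : ℚ)) ≠ 0 :=
    Finset.prod_ne_zero_iff.mpr fun q _ => Nat.cast_ne_zero.mpr (Nat.factorial_ne_zero _)
  rw [eq_div_iff hFne]
  have hcast := congrArg (Nat.cast (R := ℚ)) hnat
  push_cast at hcast
  exact_mod_cast hcast


end Crossmatch
end

section
/- Let b = ((b_{st}))_{1≤s,t≤K} be a symmetric K×K matrix of nonnegative integers satisfying 2·b_{ss} + Σ_{t≠s} b_{st} = N_s for every s ∈ {1,…,K}. Then, for a uniformly random labeling L, the probability that a_{st}(L) = b_{st} for all 1 ≤ s ≤ t ≤ K equals (N_1!⋯N_K!/N!) · 2^{Σ_{1≤s<t≤K} b_{st}} · I! / Π_{1≤s≤t≤K} (b_{st}!). -/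
open Finset Filter MeasureTheory ProbabilityTheory Topology

namespace Crossmatch

/-!
Reading a labeling `L` pair by pair turns it into the word `j ↦ (L (2j-1), L (2j))` of ordered
pairs, and the counts `a_{st}(L)` only see the unordered pairs `{L (2j-1), L (2j)}`. A favourable
labeling is therefore a word of length `I` in the unordered pairs, with `b_{st}` letters `{s, t}`
(`I! / ∏ b_{st}!` choices), together with an orientation of each of its `∑_{s<t} b_{st}` mixed
pairs (2 choices each). The row condition `2 b_{ss} + ∑_{t≠s} b_{st} = N_s` makes every such
labeling use label `s` exactly `N_s` times, and there are `N! / ∏ N_s!` labelings in all.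
-/

open Equiv Nat

section FiberCount
variable {α β : Type*} [Fintype α] [DecidableEq β]

lemma card_fiber_comp_perm (f : α → β) (σ : Perm α) (b : β) :
    #{a | f (σ a) = b} = #{a | f a = b} :=
  card_equiv σ (by simp)

lemma exists_perm_comp_eq {f g : α → β} (h : ∀ b, #{a | f a = b} = #{a | g a = b}) :
    ∃ σ : Perm α, g ∘ σ = f :=
  ⟨ofFiberEquiv fun b => Fintype.equivOfCardEq (by simpa [Fintype.card_subtype] using h b),
    funext (ofFiberEquiv_map _)⟩

lemma card_perm_comp_eq [DecidableEq α] [Fintype β] {f g : α → β} (τ : Perm α)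
    (hτ : g ∘ τ = f) : #{σ : Perm α | g ∘ σ = f} = ∏ b, (#{a | g a = b})! := by
  have hstab := DomMulAct.stabilizer_card g
  simp only [Fintype.card_subtype] at hstab
  rw [← hstab]
  refine card_equiv (Equiv.mulRight τ⁻¹) fun σ => ?_
  simp only [mem_filter, mem_univ, true_and, coe_mulRight, Perm.coe_mul, ← Function.comp_assoc,
    Perm.inv_def, comp_symm_eq, hτ]

lemma exists_card_fiber_eq [Fintype β] (c : β → ℕ) (hc : ∑ b, c b = Fintype.card α) :
    ∃ f : α → β, ∀ b, #{a | f a = b} = c b := by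
  obtain ⟨e⟩ : Nonempty (α ≃ Σ b, Fin (c b)) := Fintype.card_eq.mp (by simp [hc])
  refine ⟨fun a => (e a).1, fun b => ?_⟩
  rw [card_equiv e (t := {x | x.1 = b}) (by simp), ← Fintype.card_subtype,
    Fintype.card_congr (sigmaSubtype b), Fintype.card_fin]

/-- Orbit–stabiliser: `Perm α` acts transitively on the functions with fibre sizes `c`, and the
stabiliser of each of them permutes the fibres separately. -/
theorem card_filter_card_fiber_eq_mul_prod_factorial [DecidableEq α] [Fintype β] (c : β → ℕ)
    (hc : ∑ b, c b = Fintype.card α) :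
    #{f : α → β | ∀ b, #{a | f a = b} = c b} * ∏ b, (c b)! = (Fintype.card α)! := by
  obtain ⟨f₀, hf₀⟩ := exists_card_fiber_eq c hc
  rw [← Fintype.card_perm, ← Finset.card_univ,
    card_eq_sum_card_fiberwise (f := fun σ : Perm α => f₀ ∘ σ)
      (t := {f | ∀ b, #{a | f a = b} = c b}) (fun σ _ => by simp [card_fiber_comp_perm, hf₀]),
    sum_const_nat fun f hf => ?_]
  simp only [mem_filter, mem_univ, true_and] at hf
  obtain ⟨τ, hτ⟩ := exists_perm_comp_eq fun b => (hf b).trans (hf₀ b).symm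
  simp only [card_perm_comp_eq τ hτ, hf₀]

end FiberCount

section FiberRefinement
variable {ι α γ : Type*} [Fintype ι] [DecidableEq ι] [Fintype α] [DecidableEq γ]

lemma card_filter_comp_eq (f : α → γ) (h : ι → γ) :
    #{g : ι → α | f ∘ g = h} = ∏ j, #{a | f a = h j} := by
  rw [← Fintype.card_piFinset]
  congr 1
  ext g
  simp [funext_iff, Fintype.mem_piFinset]

theorem card_filter_card_fiber_comp_eq [Fintype γ] (f : α → γ) (c : γ → ℕ) :
    #{g : ι → α | ∀ z, #{j | f (g j) = z} = c z}
      = #{h : ι → γ | ∀ z, #{j | h j = z} = c z} * ∏ z, #{a | f a = z} ^ c z := by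
  rw [card_eq_sum_card_fiberwise (f := fun g => f ∘ g) (t := {h | ∀ z, #{j | h j = z} = c z})
      (fun g hg => by simpa using hg),
    sum_const_nat fun h hh => ?_]
  simp only [mem_filter, mem_univ, true_and] at hh
  calc #{g ∈ {g : ι → α | ∀ z, #{j | f (g j) = z} = c z} | f ∘ g = h}
      = #{g : ι → α | f ∘ g = h} := by
        congr 1; ext g
        simp only [mem_filter, mem_univ, true_and, and_iff_right_iff_imp]
        rintro rfl
        simpa using hh
    _ = ∏ j, #{a | f a = h j} := card_filter_comp_eq f h
    _ = ∏ z, #{a | f a = z} ^ c z := by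
        rw [← Finset.prod_fiberwise' univ h fun z => #{a | f a = z}]
        simp only [prod_const, hh]

end FiberRefinement

section Sym2
variable {α : Type*}

lemma card_filter_sym2_mk_eq [Fintype α] [DecidableEq α] (a b : α) :
    #{p : α × α | s(p.1, p.2) = s(a, b)} = if a = b then 1 else 2 := by
  have hfiber : ({p : α × α | s(p.1, p.2) = s(a, b)} : Finset _) = {(a, b), (b, a)} := by
    ext ⟨u, v⟩; simp
  rw [hfiber]
  split_ifs with hab
  · simp [hab]
  · exact card_pair (by simp [hab])

lemma sym2_forall_iff_forall_le [LinearOrder α] {P : Sym2 α → Prop} :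
    (∀ z, P z) ↔ ∀ a b, a ≤ b → P s(a, b) :=
  ⟨fun h _ _ _ => h _,
    fun h z => Sym2.sortEquiv.symm_apply_apply z ▸ h _ _ (Sym2.sortEquiv z).2⟩

@[to_additive]
lemma prod_sym2_eq_prod_filter_le {M : Type*} [CommMonoid M] [LinearOrder α] [Fintype α]
    (F : Sym2 α → M) :
    ∏ z, F z = ∏ q ∈ univ.filter (fun q : α × α => q.1 ≤ q.2), F s(q.1, q.2) := by
  rw [prod_subtype (p := fun q : α × α => q.1 ≤ q.2) _ (by simp)]
  exact Fintype.prod_equiv Sym2.sortEquiv _ _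
    fun z => congrArg F (Sym2.sortEquiv.symm_apply_apply z).symm

lemma prod_card_filter_sym2_mk_pow [LinearOrder α] [Fintype α] (b : α → α → ℕ)
    (hb : ∀ s t, b s t = b t s) :
    ∏ z, #{p : α × α | s(p.1, p.2) = z} ^ Sym2.lift ⟨b, hb⟩ z
      = 2 ^ ∑ q ∈ univ.filter (fun q : α × α => q.1 < q.2), b q.1 q.2 := by
  rw [prod_sym2_eq_prod_filter_le, prod_filter, sum_filter, ← prod_pow_eq_pow_sum]
  refine prod_congr rfl fun ⟨s, t⟩ _ => ?_
  dsimp only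
  rw [card_filter_sym2_mk_eq]
  rcases lt_trichotomy s t with h | rfl | h
  · simp [h.le, h, h.ne]
  · simp
  · simp [h.not_ge, h.not_gt]

lemma ite_add_ite_eq_sym2 [Fintype α] [DecidableEq α] (u v s : α) :
    ((if u = s then 1 else 0) + if v = s then 1 else 0 : ℕ)
      = 2 * (if s(u, v) = s(s, s) then 1 else 0)
        + ∑ t ∈ univ.erase s, if s(u, v) = s(s, t) then 1 else 0 := by
  by_cases hu : u = s <;> by_cases hv : v = s
  all_goals subst_vars
  all_goals simp [*]

end Sym2

lemma two_nsmul_sum_filter_le_of_symm {α M : Type*} [LinearOrder α] [Fintype α]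
    [AddCommMonoid M] (b : α → α → M) (hb : ∀ s t, b s t = b t s) :
    2 • ∑ q ∈ univ.filter (fun q : α × α => q.1 ≤ q.2), b q.1 q.2
      = ∑ s, (2 • b s s + ∑ t ∈ univ.erase s, b s t) := by
  have hswap : ∑ q ∈ univ.filter (fun q : α × α => q.2 ≤ q.1), b q.1 q.2
      = ∑ q ∈ univ.filter (fun q : α × α => q.1 ≤ q.2), b q.1 q.2 :=
    sum_equiv (prodComm α α) (by simp) fun q _ => by simp [hb q.1]
  have hpoint : ∀ q : α × α,
      (if q.1 ≤ q.2 then b q.1 q.2 else 0) + (if q.2 ≤ q.1 then b q.1 q.2 else 0)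
        = b q.1 q.2 + if q.1 = q.2 then b q.1 q.2 else 0 := by
    rintro ⟨s, t⟩
    rcases lt_trichotomy s t with h | rfl | h
    · simp [h.le, h.not_ge, h.ne]
    · simp
    · simp [h.le, h.not_ge, h.ne']
  calc 2 • ∑ q ∈ univ.filter (fun q : α × α => q.1 ≤ q.2), b q.1 q.2
      = ∑ q : α × α,
          ((if q.1 ≤ q.2 then b q.1 q.2 else 0) + if q.2 ≤ q.1 then b q.1 q.2 else 0) := by
        rw [two_nsmul]
        nth_rw 2 [← hswap]
        rw [sum_filter, sum_filter, sum_add_distrib]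
    _ = ∑ s, (b s s + ∑ t, b s t) := by
        simp only [hpoint, sum_add_distrib, Fintype.sum_prod_type, sum_ite_eq, mem_univ, if_true]
        exact add_comm _ _
    _ = ∑ s, (2 • b s s + ∑ t ∈ univ.erase s, b s t) := by
        refine sum_congr rfl fun s _ => ?_
        rw [two_nsmul, add_assoc, add_sum_erase _ _ (mem_univ s)]

lemma card_fst_eq_add_card_snd_eq {ι α : Type*} [Fintype ι] [Fintype α] [DecidableEq α]
    (p : ι → α × α) (s : α) :
    #{j | (p j).1 = s} + #{j | (p j).2 = s}
      = 2 * #{j | s((p j).1, (p j).2) = s(s, s)}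
        + ∑ t ∈ univ.erase s, #{j | s((p j).1, (p j).2) = s(s, t)} := by
  simp only [card_filter, ← sum_add_distrib, mul_sum]
  rw [sum_comm, ← sum_add_distrib]
  exact sum_congr rfl fun j _ => ite_add_ite_eq_sym2 _ _ _

section Matching
variable {I : ℕ} {α : Type*}

def pairIndexEquiv (I : ℕ) : Fin I × Fin 2 ≃ Fin (2 * I) :=
  finProdFinEquiv.trans (finCongr (mul_comm I 2))

lemma pairIndexEquiv_zero (j : Fin I) : pairIndexEquiv I (j, 0) = ep1 j :=
  Fin.ext (by simp [pairIndexEquiv, ep1])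

lemma pairIndexEquiv_one (j : Fin I) : pairIndexEquiv I (j, 1) = ep2 j :=
  Fin.ext (by simp [pairIndexEquiv, ep2]; omega)

def pairing (I : ℕ) (α : Type*) : (Fin (2 * I) → α) ≃ (Fin I → α × α) :=
  ((pairIndexEquiv I).arrowCongr (Equiv.refl α)).symm.trans <|
    (Equiv.curry _ _ _).trans (Equiv.piCongrRight fun _ => finTwoArrowEquiv α)

@[simp]
lemma pairing_apply (L : Fin (2 * I) → α) (j : Fin I) :
    pairing I α L j = (L (ep1 j), L (ep2 j)) := by
  simp [pairing, pairIndexEquiv_zero, pairIndexEquiv_one]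

lemma card_fiber_eq_ep1_add_ep2 [DecidableEq α] (L : Fin (2 * I) → α) (s : α) :
    #{i | L i = s} = #{j | L (ep1 j) = s} + #{j | L (ep2 j) = s} := by
  simp only [card_filter, ← sum_add_distrib, ← (pairIndexEquiv I).sum_comp,
    Fintype.sum_prod_type, Fin.sum_univ_two, pairIndexEquiv_zero, pairIndexEquiv_one]

lemma pair_eq_pair_iff_sym2_eq [DecidableEq α] {u v s t : α} :
    ({u, v} : Finset α) = {s, t} ↔ s(u, v) = s(s, t) := by
  rw [← coe_inj, coe_pair, coe_pair, Set.pair_eq_pair_iff, Sym2.eq_iff]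

variable {K : ℕ}

lemma crossCount_eq_card (L : Fin (2 * I) → Fin K) (s t : Fin K) :
    crossCount I K L s t = #{j | s(L (ep1 j), L (ep2 j)) = s(s, t)} := by
  simp [crossCount, pair_eq_pair_iff_sym2_eq]

end Matching

section Counting
variable {I K : ℕ} {Nc : Fin K → ℕ} {b : Fin K → Fin K → ℕ}

lemma crossCount_eq_iff (hb : ∀ s t, b s t = b t s) (L : Fin (2 * I) → Fin K) :
    (∀ s t, s ≤ t → crossCount I K L s t = b s t)
      ↔ ∀ z, #{j | s(L (ep1 j), L (ep2 j)) = z} = Sym2.lift ⟨b, hb⟩ z := by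
  simp only [sym2_forall_iff_forall_le (P := fun z => _ = Sym2.lift ⟨b, hb⟩ z),
    crossCount_eq_card, Sym2.lift_mk]

lemma mem_labelings_of_card_pair_eq (hb : ∀ s t, b s t = b t s)
    (hbrow : ∀ s : Fin K, 2 * b s s + ∑ t ∈ univ.erase s, b s t = Nc s)
    (L : Fin (2 * I) → Fin K)
    (hL : ∀ z, #{j | s(L (ep1 j), L (ep2 j)) = z} = Sym2.lift ⟨b, hb⟩ z) :
    L ∈ labelings I K Nc := by
  simp only [labelings, mem_filter, mem_univ, true_and]
  intro s
  have hdeg := card_fst_eq_add_card_snd_eq (pairing I _ L) s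
  simp only [pairing_apply, hL, Sym2.lift_mk] at hdeg
  rw [card_fiber_eq_ep1_add_ep2, hdeg, hbrow]

lemma sum_filter_le_eq_of_row_sums (hNsum : ∑ s, Nc s = 2 * I) (hb : ∀ s t, b s t = b t s)
    (hbrow : ∀ s : Fin K, 2 * b s s + ∑ t ∈ univ.erase s, b s t = Nc s) :
    ∑ q ∈ univ.filter (fun q : Fin K × Fin K => q.1 ≤ q.2), b q.1 q.2 = I := by
  have h := two_nsmul_sum_filter_le_of_symm b hb
  simp only [smul_eq_mul, hbrow, hNsum] at h
  omega

lemma card_labelings_mul_prod_factorial (hNsum : ∑ s, Nc s = 2 * I) :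
    #(labelings I K Nc) * ∏ s, (Nc s)! = (2 * I)! := by
  have h :=
    card_filter_card_fiber_eq_mul_prod_factorial (α := Fin (2 * I)) Nc (by simpa using hNsum)
  rw [Fintype.card_fin] at h
  unfold labelings
  convert h using 4

theorem card_filter_crossCount_eq_mul_prod_factorial (hNsum : ∑ s, Nc s = 2 * I)
    (hb : ∀ s t, b s t = b t s)
    (hbrow : ∀ s : Fin K, 2 * b s s + ∑ t ∈ univ.erase s, b s t = Nc s) :
    #{L ∈ labelings I K Nc | ∀ s t, s ≤ t → crossCount I K L s t = b s t}
        * ∏ q ∈ univ.filter (fun q : Fin K × Fin K => q.1 ≤ q.2), (b q.1 q.2)!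
      = 2 ^ (∑ q ∈ univ.filter (fun q : Fin K × Fin K => q.1 < q.2), b q.1 q.2) * I ! := by
  set c := Sym2.lift ⟨b, hb⟩
  have hpairs : #{L ∈ labelings I K Nc | ∀ s t, s ≤ t → crossCount I K L s t = b s t}
      = #{g : Fin I → Fin K × Fin K | ∀ z, #{j | s((g j).1, (g j).2) = z} = c z} := by
    refine card_equiv (pairing I _) fun L => ?_
    simp only [mem_filter, mem_univ, true_and, crossCount_eq_iff hb, pairing_apply]
    exact and_iff_right_of_imp (mem_labelings_of_card_pair_eq hb hbrow L)
  have hsum : ∑ z, c z = Fintype.card (Fin I) := by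
    rw [sum_sym2_eq_sum_filter_le, Fintype.card_fin,
      ← sum_filter_le_eq_of_row_sums hNsum hb hbrow]
    rfl
  have hprod :
      ∏ z, (c z)! = ∏ q ∈ univ.filter (fun q : Fin K × Fin K => q.1 ≤ q.2), (b q.1 q.2)! :=
    prod_sym2_eq_prod_filter_le _
  rw [hpairs, card_filter_card_fiber_comp_eq, prod_card_filter_sym2_mk_pow, ← hprod,
    mul_right_comm, card_filter_card_fiber_eq_mul_prod_factorial c hsum, Fintype.card_fin,
    mul_comm]

end Counting

theorem stmt1_general (K I : ℕ)
    (Nc : Fin K → ℕ) (hNsum : ∑ s, Nc s = 2 * I)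
    (b : Fin K → Fin K → ℕ) (hbsymm : ∀ s t, b s t = b t s)
    (hbrow : ∀ s : Fin K, 2 * b s s + ∑ t ∈ univ.erase s, b s t = Nc s) :
    pr I K Nc (fun L => ∀ s t : Fin K, s ≤ t → crossCount I K L s t = b s t)
      = ((∏ s, ((Nc s).factorial : ℝ)) / ((2 * I).factorial : ℝ))
        * ((2 : ℝ) ^ (∑ q ∈ univ.filter (fun q : Fin K × Fin K => q.1 < q.2), b q.1 q.2)
            * (I.factorial : ℝ)
          / ∏ q ∈ univ.filter (fun q : Fin K × Fin K => q.1 ≤ q.2),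
              ((b q.1 q.2).factorial : ℝ)) := by
  have hlab : (#(labelings I K Nc) : ℝ) * ∏ s, ((Nc s)! : ℝ) = (2 * I)! := by
    exact_mod_cast card_labelings_mul_prod_factorial hNsum
  have hev : (#{L ∈ labelings I K Nc | ∀ s t, s ≤ t → crossCount I K L s t = b s t} : ℝ)
        * ∏ q ∈ univ.filter (fun q : Fin K × Fin K => q.1 ≤ q.2), ((b q.1 q.2)! : ℝ)
      = 2 ^ (∑ q ∈ univ.filter (fun q : Fin K × Fin K => q.1 < q.2), b q.1 q.2) * I ! := by
    exact_mod_cast card_filter_crossCount_eq_mul_prod_factorial hNsum hbsymm hbrow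
  unfold pr
  rw [filter_congr_decidable, ← hlab, ← hev]
  field_simp

/-- for a uniformly random labeling, the probability that the count matrix
equals `b` is `(N_1!⋯N_K!/N!) · 2^{Σ_{s<t} b_{st}} · I! / Π_{s≤t} (b_{st})!`. -/
theorem stmt1 (K I : ℕ) (hK : 2 ≤ K) (hI : 1 ≤ I)
    (Nc : Fin K → ℕ) (hNpos : ∀ s, 0 < Nc s) (hNsum : ∑ s, Nc s = 2 * I)
    (b : Fin K → Fin K → ℕ) (hbsymm : ∀ s t, b s t = b t s)
    (hbrow : ∀ s : Fin K, 2 * b s s + ∑ t ∈ univ.erase s, b s t = Nc s) :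
    pr I K Nc (fun L => ∀ s t : Fin K, s ≤ t → crossCount I K L s t = b s t)
      = ((∏ s, ((Nc s).factorial : ℝ)) / ((2 * I).factorial : ℝ))
        * ((2 : ℝ) ^ (∑ q ∈ univ.filter (fun q : Fin K × Fin K => q.1 < q.2), b q.1 q.2)
            * (I.factorial : ℝ)
          / ∏ q ∈ univ.filter (fun q : Fin K × Fin K => q.1 ≤ q.2),
              ((b q.1 q.2).factorial : ℝ)) :=
  stmt1_general K I Nc hNsum b hbsymm hbrow

end Crossmatch
end

section
/- Assume N ≥ 4. For a uniformly random labeling L and any 1 ≤ s₁ ≠ s₂ ≤ K, the variance of the cross-count satisfies Var(a_{s₁s₂}) = N_{s₁}N_{s₂}(N_{s₁}−1)(N_{s₂}−1)/((N−1)(N−3)) + (N_{s₁}N_{s₂}/(N−1))·(1 − N_{s₁}N_{s₂}/(N−1)). -/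
/-!
Composing a uniformly random labeling with a permutation of the positions gives again a uniformly
random labeling, and permutations act transitively on injective tuples of positions. Hence the
labels `L ∘ v` read off an injective tuple `v` of `m` positions have a law independent of `v`, and
averaging over all `(N)_m` such tuples shows `P(L ∘ v = w) = ∏_c (N_c)_{m_c} / (N)_m`, where
`m_c` is the number of entries of `w` equal to `c` and `(n)_k` is the falling factorial. The
cross-count is the sum over the `I` matched pairs of the indicator that the pair carries the labels
`s₁, s₂` in either order: its mean only needs this formula for `m = 2`, and its second moment for
`m = 4`, since two distinct matched pairs occupy four distinct positions.
-/

open Finset Filter MeasureTheory ProbabilityTheory Topology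

namespace Function.Embedding

variable {ι α β : Type*}

def subtypeCompEqEquiv (L : α → β) (w : ι → β) :
    {u : ι ↪ α // L ∘ u = w} ≃ ∀ c, {i // w i = c} ↪ {x // L x = c} where
  toFun u c := ⟨fun i => ⟨u.1 i.1, (congrFun u.2 i.1).trans i.2⟩,
    fun i i' h => Subtype.ext (u.1.injective (congrArg Subtype.val h))⟩
  invFun φ := by
    refine ⟨⟨fun i => (φ (w i) ⟨i, rfl⟩).1, fun i i' h => ?_⟩,
      funext fun i => (φ (w i) ⟨i, rfl⟩).2⟩
    suffices ∀ c c' (hi : w i = c) (hi' : w i' = c'),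
        (φ c ⟨i, hi⟩).1 = (φ c' ⟨i', hi'⟩).1 → i = i' from this _ _ rfl rfl h
    intro c c' hi hi' h
    obtain rfl : c = c' := by rw [← (φ c _).2, ← (φ c' _).2, h]
    exact congrArg Subtype.val ((φ c).injective (Subtype.ext h))
  left_inv u := rfl
  right_inv φ := by
    funext c
    ext ⟨i, rfl⟩
    rfl

theorem card_filter_comp_eq [Fintype ι] [Fintype α] [Fintype β]
    [DecidableEq β] (L : α → β) (w : ι → β) :
    #{u : ι ↪ α | L ∘ u = w} = ∏ c, (#{x | L x = c}).descFactorial #{i | w i = c} := by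
  rw [← Fintype.card_subtype, Fintype.card_congr (subtypeCompEqEquiv L w), Fintype.card_pi]
  simp only [Fintype.card_embedding_eq, Fintype.card_subtype]

end Function.Embedding

theorem Nat.cast_descFactorial_four {S : Type*} [CommRing S] (n : ℕ) :
    (n.descFactorial 4 : S) = n * (n - 1) * (n - 2) * (n - 3) := by
  rcases n with _ | _ | _ | _ | n <;> simp [Nat.descFactorial_succ]
  ring

theorem prod_descFactorial_card_fiber_eq_mul {ι β : Type*} [Fintype ι] [Fintype β]
    [DecidableEq β] (n : β → ℕ) {s t : β} (hst : s ≠ t) (w : ι → β)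
    (hw : ∀ i, w i = s ∨ w i = t) :
    ∏ c, (n c).descFactorial #{i | w i = c}
      = (n s).descFactorial #{i | w i = s} * (n t).descFactorial #{i | w i = t} := by
  refine Fintype.prod_eq_mul s t hst fun c hc => ?_
  have : #{i | w i = c} = 0 := by
    rw [card_eq_zero, filter_eq_empty_iff]
    rintro i - rfl
    exact (hw i).elim hc.1 hc.2
  simp [this]

namespace Crossmatch

variable {I K : ℕ} {Nc : Fin K → ℕ}

theorem comp_perm_mem_labelings (σ : Equiv.Perm (Fin (2 * I))) {L : Fin (2 * I) → Fin K}
    (hL : L ∈ labelings I K Nc) : L ∘ σ ∈ labelings I K Nc := by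
  simp only [labelings, mem_filter, mem_univ, true_and] at hL ⊢
  intro s
  rw [← hL s]
  exact card_equiv σ (by simp)

theorem card_filter_labelings_comp_perm (σ : Equiv.Perm (Fin (2 * I)))
    (p : (Fin (2 * I) → Fin K) → Prop) [DecidablePred p] :
    #{L ∈ labelings I K Nc | p (L ∘ σ)} = #{L ∈ labelings I K Nc | p L} := by
  refine card_nbij' (· ∘ σ) (· ∘ σ.symm) (fun L hL => ?_) (fun L hL => ?_)
    (fun L _ => by ext; simp) (fun L _ => by ext; simp)
  · simp only [coe_filter, Set.mem_ofPred_eq] at hL ⊢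
    exact ⟨comp_perm_mem_labelings σ hL.1, hL.2⟩
  · simp only [coe_filter, Set.mem_ofPred_eq] at hL ⊢
    exact ⟨comp_perm_mem_labelings σ.symm hL.1, by simpa [Function.comp_assoc] using hL.2⟩

theorem card_filter_labelings_comp_embedding_eq {m : ℕ} (u v : Fin m ↪ Fin (2 * I))
    (w : Fin m → Fin K) :
    #{L ∈ labelings I K Nc | L ∘ u = w} = #{L ∈ labelings I K Nc | L ∘ v = w} := by
  obtain ⟨σ, hσ⟩ := Equiv.Perm.exists_extending_pair v u v.injective u.injective
  have hu : ⇑u = σ ∘ v := funext fun k => (hσ k).symm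
  simp_rw [hu, ← Function.comp_assoc]
  exact card_filter_labelings_comp_perm σ (fun L => L ∘ v = w)

theorem descFactorial_mul_card_filter_labelings_comp_eq {m : ℕ} (v : Fin m ↪ Fin (2 * I))
    (w : Fin m → Fin K) :
    (2 * I).descFactorial m * #{L ∈ labelings I K Nc | L ∘ v = w}
      = #(labelings I K Nc) * ∏ c, (Nc c).descFactorial #{k | w k = c} := by
  calc (2 * I).descFactorial m * #{L ∈ labelings I K Nc | L ∘ v = w}
      = ∑ u : Fin m ↪ Fin (2 * I), #{L ∈ labelings I K Nc | L ∘ u = w} := by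
        simp [card_filter_labelings_comp_embedding_eq _ v, Fintype.card_embedding_eq]
    _ = ∑ L ∈ labelings I K Nc, #{u : Fin m ↪ Fin (2 * I) | L ∘ u = w} := by
        simp only [card_filter]
        exact sum_comm
    _ = _ := by
        refine sum_const_nat fun L hL => ?_
        simp only [labelings, mem_filter] at hL
        simp only [Function.Embedding.card_filter_comp_eq, hL.2]

theorem labelings_nonempty (hNsum : ∑ s, Nc s = 2 * I) : (labelings I K Nc).Nonempty := by
  let e : (Σ s, Fin (Nc s)) ≃ Fin (2 * I) := Fintype.equivOfCardEq (by simp [hNsum])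
  refine ⟨fun i => (e.symm i).1, ?_⟩
  simp only [labelings, mem_filter, mem_univ, true_and]
  intro s
  rw [← Fintype.card_subtype, ← Fintype.card_fin (Nc s)]
  exact Fintype.card_congr ((e.symm.subtypeEquiv fun _ => Iff.rfl).trans (Equiv.sigmaSubtype s))

theorem expct_sum {ι : Type*} (t : Finset ι) (X : ι → (Fin (2 * I) → Fin K) → ℝ) :
    expct I K Nc (fun L => ∑ i ∈ t, X i L) = ∑ i ∈ t, expct I K Nc (X i) := by
  simp only [expct, sum_comm (s := labelings I K Nc), sum_div]

theorem expct_add (X Y : (Fin (2 * I) → Fin K) → ℝ) :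
    expct I K Nc (fun L => X L + Y L) = expct I K Nc X + expct I K Nc Y := by
  simp only [expct, sum_add_distrib, add_div]

theorem variance_eq_expct_sq_sub_sq (hne : (labelings I K Nc).Nonempty)
    (X : (Fin (2 * I) → Fin K) → ℝ) :
    variance I K Nc X = expct I K Nc (fun L => X L ^ 2) - expct I K Nc X ^ 2 := by
  have hcard : (#(labelings I K Nc) : ℝ) ≠ 0 := by exact_mod_cast hne.card_pos.ne'
  simp only [variance, expct, sub_sq, sum_add_distrib, sum_sub_distrib, ← sum_mul, ← mul_sum,
    sum_const, nsmul_eq_mul]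
  field_simp
  ring

theorem expct_ite_comp_eq (hNsum : ∑ s, Nc s = 2 * I) {m : ℕ} (v : Fin m ↪ Fin (2 * I))
    (w : Fin m → Fin K) :
    expct I K Nc (fun L => if L ∘ v = w then 1 else 0)
      = ((∏ c, (Nc c).descFactorial #{k | w k = c} : ℕ) : ℝ) / (2 * I).descFactorial m := by
  have hcard : (#(labelings I K Nc) : ℝ) ≠ 0 := by
    exact_mod_cast (labelings_nonempty hNsum).card_pos.ne'
  have hm : m ≤ 2 * I := by simpa using Fintype.card_le_of_embedding v
  have hdesc : ((2 * I).descFactorial m : ℝ) ≠ 0 := by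
    exact_mod_cast (Nat.descFactorial_pos.mpr hm).ne'
  rw [expct, sum_boole, div_eq_div_iff hcard hdesc, mul_comm]
  exact_mod_cast (descFactorial_mul_card_filter_labelings_comp_eq v w).trans (mul_comm _ _)

def matchedPair (j : Fin I) : Fin 2 ↪ Fin (2 * I) :=
  ⟨![ep1 j, ep2 j], by
    intro a b
    fin_cases a <;> fin_cases b <;> simp [ep1, ep2]⟩

def twoMatchedPairs {j k : Fin I} (hjk : j ≠ k) : Fin 4 ↪ Fin (2 * I) :=
  ⟨![ep1 j, ep2 j, ep1 k, ep2 k], by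
    have : j.val ≠ k.val := Fin.val_ne_of_ne hjk
    intro a b
    fin_cases a <;> fin_cases b <;> simp [ep1, ep2] <;> omega⟩

theorem coe_matchedPair (j : Fin I) : ⇑(matchedPair j) = ![ep1 j, ep2 j] := rfl

theorem coe_twoMatchedPairs {j k : Fin I} (hjk : j ≠ k) :
    ⇑(twoMatchedPairs hjk) = ![ep1 j, ep2 j, ep1 k, ep2 k] := rfl

def pairInd (j : Fin I) (a b : Fin K) : (Fin (2 * I) → Fin K) → ℝ :=
  fun L => if L ∘ matchedPair j = ![a, b] then 1 else 0

def crossInd (j : Fin I) (s t : Fin K) (L : Fin (2 * I) → Fin K) : ℝ :=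
  if ({L (ep1 j), L (ep2 j)} : Finset (Fin K)) = {s, t} then 1 else 0

theorem crossCount_eq_sum_crossInd (L : Fin (2 * I) → Fin K) (s t : Fin K) :
    (crossCount I K L s t : ℝ) = ∑ j, crossInd j s t L := by
  simp only [crossCount, natCast_card_filter, crossInd]

theorem crossInd_eq_add {s t : Fin K} (hst : s ≠ t) (j : Fin I) (L : Fin (2 * I) → Fin K) :
    crossInd j s t L = pairInd j s t L + pairInd j t s L := by
  simp only [crossInd, pairInd, ← coe_inj, coe_pair, Set.pair_eq_pair_iff, funext_iff,
    Fin.forall_fin_two, coe_matchedPair]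
  split_ifs <;> aesop

theorem crossInd_mul_self (j : Fin I) (s t : Fin K) (L : Fin (2 * I) → Fin K) :
    crossInd j s t L * crossInd j s t L = crossInd j s t L := by
  unfold crossInd
  split_ifs <;> norm_num

theorem pairInd_mul_pairInd {j k : Fin I} (hjk : j ≠ k) (a b c d : Fin K)
    (L : Fin (2 * I) → Fin K) :
    pairInd j a b L * pairInd k c d L
      = if L ∘ twoMatchedPairs hjk = ![a, b, c, d] then 1 else 0 := by
  simp only [pairInd, ite_zero_mul_ite_zero, one_mul, funext_iff, Fin.forall_fin_succ,
    coe_matchedPair, coe_twoMatchedPairs]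
  simp [and_assoc]

theorem expct_pairInd (hNsum : ∑ s, Nc s = 2 * I) {a b : Fin K} (hab : a ≠ b) (j : Fin I) :
    expct I K Nc (pairInd j a b) = Nc a * Nc b / (2 * I * (2 * I - 1)) := by
  unfold pairInd
  rw [expct_ite_comp_eq hNsum,
    prod_descFactorial_card_fiber_eq_mul Nc hab _ (by simp [Fin.forall_fin_two])]
  simp only [card_filter, Fin.sum_univ_two, Nat.cast_mul, Nat.cast_descFactorial_two]
  simp [hab, hab.symm]

theorem expct_crossInd (hNsum : ∑ s, Nc s = 2 * I) {s t : Fin K} (hst : s ≠ t) (j : Fin I) :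
    expct I K Nc (crossInd j s t) = 2 * (Nc s * Nc t / (2 * I * (2 * I - 1))) := by
  rw [funext (crossInd_eq_add hst j), expct_add, expct_pairInd hNsum hst,
    expct_pairInd hNsum hst.symm]
  ring

theorem expct_pairInd_mul_pairInd (hNsum : ∑ s, Nc s = 2 * I) {s t : Fin K} (hst : s ≠ t)
    {j k : Fin I} (hjk : j ≠ k) {a b c d : Fin K} (hab : a = s ∧ b = t ∨ a = t ∧ b = s)
    (hcd : c = s ∧ d = t ∨ c = t ∧ d = s) :
    expct I K Nc (fun L => pairInd j a b L * pairInd k c d L)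
      = Nc s * (Nc s - 1) * (Nc t * (Nc t - 1))
          / (2 * I * (2 * I - 1) * (2 * I - 2) * (2 * I - 3)) := by
  have hw : ∀ i, ![a, b, c, d] i = s ∨ ![a, b, c, d] i = t := by
    simp only [Fin.forall_fin_succ, IsEmpty.forall_iff]
    aesop
  have hcount : #{i | ![a, b, c, d] i = s} = 2 ∧ #{i | ![a, b, c, d] i = t} = 2 := by
    simp only [card_filter, Fin.sum_univ_four]
    rcases hab with ⟨rfl, rfl⟩ | ⟨rfl, rfl⟩ <;> rcases hcd with ⟨rfl, rfl⟩ | ⟨rfl, rfl⟩ <;>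
      simp [hst, hst.symm]
  rw [funext (pairInd_mul_pairInd hjk a b c d), expct_ite_comp_eq hNsum,
    prod_descFactorial_card_fiber_eq_mul Nc hst _ hw, hcount.1, hcount.2, Nat.cast_mul,
    Nat.cast_descFactorial_two, Nat.cast_descFactorial_two, Nat.cast_descFactorial_four]
  push_cast
  ring

theorem expct_crossInd_mul_crossInd (hNsum : ∑ s, Nc s = 2 * I) {s t : Fin K} (hst : s ≠ t)
    {j k : Fin I} (hjk : j ≠ k) :
    expct I K Nc (fun L => crossInd j s t L * crossInd k s t L)
      = 4 * (Nc s * (Nc s - 1) * (Nc t * (Nc t - 1))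
          / (2 * I * (2 * I - 1) * (2 * I - 2) * (2 * I - 3))) := by
  simp only [crossInd_eq_add hst, add_mul, mul_add, expct_add,
    expct_pairInd_mul_pairInd hNsum hst hjk (.inl ⟨rfl, rfl⟩) (.inl ⟨rfl, rfl⟩),
    expct_pairInd_mul_pairInd hNsum hst hjk (.inl ⟨rfl, rfl⟩) (.inr ⟨rfl, rfl⟩),
    expct_pairInd_mul_pairInd hNsum hst hjk (.inr ⟨rfl, rfl⟩) (.inl ⟨rfl, rfl⟩),
    expct_pairInd_mul_pairInd hNsum hst hjk (.inr ⟨rfl, rfl⟩) (.inr ⟨rfl, rfl⟩)]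
  ring

theorem expct_crossCount (hNsum : ∑ s, Nc s = 2 * I) (hI : I ≠ 0) {s t : Fin K} (hst : s ≠ t) :
    expct I K Nc (fun L => (crossCount I K L s t : ℝ)) = Nc s * Nc t / (2 * I - 1) := by
  have hI' : (I : ℝ) ≠ 0 := by exact_mod_cast hI
  simp only [crossCount_eq_sum_crossInd, expct_sum, expct_crossInd hNsum hst, sum_const,
    card_univ, Fintype.card_fin, nsmul_eq_mul]
  field_simp

theorem expct_crossCount_sq (hNsum : ∑ s, Nc s = 2 * I) (hN : 4 ≤ 2 * I) {s t : Fin K}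
    (hst : s ≠ t) :
    expct I K Nc (fun L => (crossCount I K L s t : ℝ) ^ 2)
      = Nc s * Nc t / (2 * I - 1)
        + Nc s * Nc t * (Nc s - 1) * (Nc t - 1) / ((2 * I - 1) * (2 * I - 3)) := by
  have hrow : ∀ j : Fin I, ∑ k, expct I K Nc (fun L => crossInd j s t L * crossInd k s t L)
      = 2 * (Nc s * Nc t / (2 * I * (2 * I - 1)))
        + (I - 1) * (4 * (Nc s * (Nc s - 1) * (Nc t * (Nc t - 1))
          / (2 * I * (2 * I - 1) * (2 * I - 2) * (2 * I - 3)))) := by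
    intro j
    rw [← add_sum_erase _ _ (mem_univ j), sum_congr rfl fun k hk =>
      expct_crossInd_mul_crossInd hNsum hst (ne_of_mem_erase hk).symm]
    simp only [crossInd_mul_self, expct_crossInd hNsum hst, sum_const,
      card_erase_of_mem (mem_univ j), card_univ, Fintype.card_fin, nsmul_eq_mul]
    rw [Nat.cast_sub (by omega)]
    push_cast
    ring
  simp only [crossCount_eq_sum_crossInd, sq, sum_mul_sum, expct_sum, hrow, sum_const, card_univ,
    Fintype.card_fin, nsmul_eq_mul]
  have hN' : (4 : ℝ) ≤ 2 * I := by exact_mod_cast hN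
  have h0 : (I : ℝ) ≠ 0 := by exact_mod_cast (show I ≠ 0 by omega)
  have h1 : (2 * I - 1 : ℝ) ≠ 0 := by linarith
  have h2 : (I - 1 : ℝ) ≠ 0 := by linarith
  have h3 : (2 * I - 3 : ℝ) ≠ 0 := by linarith
  field_simp
  ring

theorem stmt3_general (K I : ℕ) (hN : 4 ≤ 2 * I)
    (Nc : Fin K → ℕ) (hNsum : ∑ s, Nc s = 2 * I)
    (s₁ s₂ : Fin K) (hs : s₁ ≠ s₂) :
    variance I K Nc (fun L => (crossCount I K L s₁ s₂ : ℝ))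
      = (Nc s₁ : ℝ) * (Nc s₂ : ℝ) * ((Nc s₁ : ℝ) - 1) * ((Nc s₂ : ℝ) - 1)
          / (((2 * I : ℝ) - 1) * ((2 * I : ℝ) - 3))
        + ((Nc s₁ : ℝ) * (Nc s₂ : ℝ) / ((2 * I : ℝ) - 1))
            * (1 - (Nc s₁ : ℝ) * (Nc s₂ : ℝ) / ((2 * I : ℝ) - 1)) := by
  rw [variance_eq_expct_sq_sub_sq (labelings_nonempty hNsum), expct_crossCount_sq hNsum hN hs,
    expct_crossCount hNsum (by omega) hs]
  ring

/-- null variance of a cross-count, for `N ≥ 4` and `s₁ ≠ s₂`. -/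
theorem stmt3 (K I : ℕ) (hK : 2 ≤ K) (hI : 1 ≤ I) (hN : 4 ≤ 2 * I)
    (Nc : Fin K → ℕ) (hNpos : ∀ s, 0 < Nc s) (hNsum : ∑ s, Nc s = 2 * I)
    (s₁ s₂ : Fin K) (hs : s₁ ≠ s₂) :
    variance I K Nc (fun L => (crossCount I K L s₁ s₂ : ℝ))
      = (Nc s₁ : ℝ) * (Nc s₂ : ℝ) * ((Nc s₁ : ℝ) - 1) * ((Nc s₂ : ℝ) - 1)
          / (((2 * I : ℝ) - 1) * ((2 * I : ℝ) - 3))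
        + ((Nc s₁ : ℝ) * (Nc s₂ : ℝ) / ((2 * I : ℝ) - 1))
            * (1 - (Nc s₁ : ℝ) * (Nc s₂ : ℝ) / ((2 * I : ℝ) - 1)) :=
  stmt3_general K I hN Nc hNsum s₁ s₂ hs

end Crossmatch
end

section
/- Assume K ≥ 3 and N ≥ 4. For a uniformly random labeling L and any pairwise distinct s₁, s₂, s₃ ∈ {1,…,K}, the product moment of the cross-counts satisfies E[a_{s₁s₂}·a_{s₁s₃}] = N_{s₁}(N_{s₁}−1)N_{s₂}N_{s₃}/((N−1)(N−3)). -/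
/-!
Expanding both cross-counts, `E[a_{s₁s₂} a_{s₁s₃}]` is a sum over ordered pairs `(j, j')` of
matched edges of the probability that edge `j` carries the labels `{s₁, s₂}` and edge `j'`
the labels `{s₁, s₃}`. This is impossible for `j = j'`. For `j ≠ j'`, swapping the two
endpoints of an edge preserves the uniform law, so the event splits into four equally likely
copies of the event that the four endpoints carry `s₁, s₂, s₁, s₃`, in this order.

By exchangeability a uniform labeling takes prescribed values `x` at `m` distinct positions
with probability `∏ₛ (N_s)_{c_s} / (N)_m`, where `c_s` counts the occurrences of `s` in `x`
and `(n)_k` is the falling factorial. Hence each off-diagonal term is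
`4 N_{s₁}(N_{s₁}-1)N_{s₂}N_{s₃} / (N)_4`, and the `I(I-1)` ordered pairs contribute the
claimed value because `4I(I-1) = N(N-2)`.
-/

open Finset Filter MeasureTheory ProbabilityTheory Topology

namespace Crossmatch

theorem pair_eq_pair_iff {β : Type*} [DecidableEq β] {x y s t : β} :
    ({x, y} : Finset β) = {s, t} ↔ x = s ∧ y = t ∨ x = t ∧ y = s := by
  rw [← coe_inj]
  push_cast
  exact Set.pair_eq_pair_iff

theorem sum_card_filter_mul_card_filter {β ι : Type*} (S : Finset β) (J : Finset ι)
    (P Q : β → ι → Prop) [∀ x j, Decidable (P x j)] [∀ x j, Decidable (Q x j)] :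
    ∑ x ∈ S, #{j ∈ J | P x j} * #{j ∈ J | Q x j} =
      ∑ j ∈ J, ∑ j' ∈ J, #{x ∈ S | P x j ∧ Q x j'} := by
  simp only [card_filter, sum_mul_sum, ite_zero_mul_ite_zero, mul_one]
  rw [sum_comm]
  exact sum_congr rfl fun j _ => sum_comm

section Swap

variable {α κ : Type*} [DecidableEq α]

theorem card_filter_comp_swap {S : Finset (α → κ)} {a b : α}
    (hS : ∀ L ∈ S, L ∘ Equiv.swap a b ∈ S) (P : (α → κ) → Prop) [DecidablePred P] :
    #{L ∈ S | P (L ∘ Equiv.swap a b)} = #{L ∈ S | P L} := by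
  have hinv : ∀ L : α → κ, L ∘ Equiv.swap a b ∘ Equiv.swap a b = L := fun L => by
    funext i
    simp
  refine card_nbij' (· ∘ Equiv.swap a b) (· ∘ Equiv.swap a b) ?_ ?_ ?_ ?_
  · intro L hL
    simp only [coe_filter] at hL ⊢
    exact ⟨hS L hL.1, hL.2⟩
  · intro L hL
    simp only [coe_filter] at hL ⊢
    exact ⟨hS L hL.1, by rw [Function.comp_assoc, hinv]; exact hL.2⟩
  · exact fun L _ => hinv L
  · exact fun L _ => hinv L

theorem card_filter_pair_eq_pair [DecidableEq κ] {S : Finset (α → κ)} {a b : α}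
    (hS : ∀ L ∈ S, L ∘ Equiv.swap a b ∈ S) {s t : κ} (hst : s ≠ t) :
    #{L ∈ S | ({L a, L b} : Finset κ) = {s, t}} = 2 * #{L ∈ S | L a = s ∧ L b = t} := by
  classical
  have hswap : #{L ∈ S | L b = s ∧ L a = t} = #{L ∈ S | L a = s ∧ L b = t} := by
    simpa using card_filter_comp_swap hS (fun L => L a = s ∧ L b = t)
  have hdisj : Disjoint {L ∈ S | L a = s ∧ L b = t} {L ∈ S | L b = s ∧ L a = t} :=
    disjoint_filter.2 fun L _ h h' => hst (h.1.symm.trans h'.2)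
  rw [filter_congr fun L _ => (pair_eq_pair_iff (x := L a)).trans (or_congr_right and_comm),
    filter_or, card_union_of_disjoint hdisj, hswap, two_mul]

end Swap

section Labelings

variable {κ : Type*} [Fintype κ] [DecidableEq κ]

def labelingsOf (α : Type*) [Fintype α] [DecidableEq α] (N : κ → ℕ) : Finset (α → κ) :=
  univ.filter fun L => ∀ s, #{i | L i = s} = N s

variable {α : Type*} [Fintype α] [DecidableEq α] {N : κ → ℕ}

theorem labelings_eq_labelingsOf (I K : ℕ) (Nc : Fin K → ℕ) :
    labelings I K Nc = labelingsOf (Fin (2 * I)) Nc := by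
  unfold labelings labelingsOf
  congr

theorem comp_perm_mem_labelingsOf {L : α → κ} (hL : L ∈ labelingsOf α N)
    (σ : Equiv.Perm α) : L ∘ σ ∈ labelingsOf α N := by
  simp only [labelingsOf, mem_filter, mem_univ, true_and] at hL ⊢
  intro s
  rw [← hL s]
  exact card_equiv σ (by simp)

theorem labelingsOf_nonempty (hN : ∑ s, N s = Fintype.card α) :
    (labelingsOf α N).Nonempty := by
  have e : α ≃ Σ s, Fin (N s) := Fintype.equivOfCardEq (by simp [hN])
  refine ⟨fun i => (e i).1, ?_⟩
  simp only [labelingsOf, mem_filter, mem_univ, true_and]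
  intro s
  rw [← Fintype.card_subtype, ← Fintype.card_fin (N s)]
  exact Fintype.card_congr ((e.subtypeEquiv fun _ => Iff.rfl).trans (Equiv.sigmaSubtype s))

theorem comp_swap_mem_filter_labelingsOf {Q : (α → κ) → Prop} [DecidablePred Q] {a b : α}
    (hQ : ∀ L, Q (L ∘ Equiv.swap a b) ↔ Q L) :
    ∀ L ∈ {L ∈ labelingsOf α N | Q L},
      L ∘ Equiv.swap a b ∈ {L ∈ labelingsOf α N | Q L} := by
  intro L hL
  rw [mem_filter] at hL ⊢
  exact ⟨comp_perm_mem_labelingsOf hL.1 _, (hQ L).2 hL.2⟩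

/-- Count the pairs `(L, b)` with `b` outside the range of `p` and `L b = s` in two ways;
precomposing with `swap a b` shows that each such `b` carries `s` as often as `a` does. -/
theorem card_filter_apply_mul_card_compl_range {m : ℕ} {p : Fin m → α} (hp : p.Injective)
    (x : Fin m → κ) {a : α} (ha : a ∉ Set.range p) (s : κ) :
    #{L ∈ {L ∈ labelingsOf α N | L ∘ p = x} | L a = s} * (Fintype.card α - m) =
      #{L ∈ labelingsOf α N | L ∘ p = x} * (N s - #{i | x i = s}) := by
  set E := {L ∈ labelingsOf α N | L ∘ p = x}
  set U : Finset α := (univ.image p)ᶜ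
  have hU : #U = Fintype.card α - m := by
    rw [card_compl, card_image_of_injective _ hp, card_univ, Fintype.card_fin]
  have hswap : ∀ b ∈ U, #{L ∈ E | L b = s} = #{L ∈ E | L a = s} := by
    intro b hb
    have hb : b ∉ Set.range p := by simpa [U] using hb
    have hfix : Equiv.swap a b ∘ p = p :=
      funext fun i => Equiv.swap_apply_of_ne_of_ne (fun h => ha ⟨i, h⟩) (fun h => hb ⟨i, h⟩)
    have hE := comp_swap_mem_filter_labelingsOf (N := N) (Q := fun L => L ∘ p = x)
      fun L => by rw [Function.comp_assoc, hfix]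
    simpa using card_filter_comp_swap hE (fun L => L a = s)
  have hfiber : ∀ L ∈ E, #{b ∈ U | L b = s} = N s - #{i | x i = s} := by
    intro L hL
    simp only [E, labelingsOf, mem_filter, mem_univ, true_and] at hL
    obtain ⟨hN, rfl⟩ := hL
    have hsplit :
        {b ∈ U | L b = s} = ({b | L b = s} : Finset α) \ {b ∈ univ.image p | L b = s} := by
      ext b
      simp [U]
      tauto
    rw [hsplit, card_sdiff_of_subset (filter_subset_filter _ (subset_univ _)), hN, filter_image,
      card_image_of_injective _ hp]
    rfl
  calc #{L ∈ E | L a = s} * (Fintype.card α - m)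
      = ∑ b ∈ U, #{L ∈ E | L b = s} := by
        rw [sum_congr rfl hswap, sum_const, hU, smul_eq_mul, mul_comm]
    _ = ∑ L ∈ E, #{b ∈ U | L b = s} := sum_card_bipartiteAbove_eq_sum_card_bipartiteBelow _
    _ = #E * (N s - #{i | x i = s}) := by
        rw [sum_congr rfl hfiber, sum_const, smul_eq_mul]

theorem prod_descFactorial_card_filter_cons {m : ℕ} (N : κ → ℕ) (s : κ) (x : Fin m → κ) :
    ∏ t, (N t).descFactorial #{i | (Fin.cons s x : Fin (m + 1) → κ) i = t} =
      (N s - #{i | x i = s}) * ∏ t, (N t).descFactorial #{i | x i = t} := by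
  have hcard : ∀ t, #{i | (Fin.cons s x : Fin (m + 1) → κ) i = t} =
      #{i | x i = t} + if s = t then 1 else 0 := by
    intro t
    rw [card_filter, card_filter, Fin.sum_univ_succ]
    simp only [Fin.cons_zero, Fin.cons_succ]
    ring
  have hfactor : ∀ t, (N t).descFactorial (#{i | x i = t} + if s = t then 1 else 0) =
      (if s = t then N t - #{i | x i = t} else 1) * (N t).descFactorial #{i | x i = t} := by
    intro t
    split_ifs <;> simp [Nat.descFactorial_succ]
  simp_rw [hcard, hfactor, prod_mul_distrib, prod_ite_eq, mem_univ, if_true]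

theorem prod_descFactorial_card_filter_abac (N : κ → ℕ) {a b c : κ} (hab : a ≠ b)
    (hac : a ≠ c) (hbc : b ≠ c) :
    ∏ s, (N s).descFactorial #{i | ![a, b, a, c] i = s} =
      (N a).descFactorial 2 * N b * N c := by
  rw [Matrix.vecCons, prod_descFactorial_card_filter_cons, Matrix.vecCons,
    prod_descFactorial_card_filter_cons, Matrix.vecCons, prod_descFactorial_card_filter_cons,
    Matrix.vecCons, prod_descFactorial_card_filter_cons]
  simp [card_filter, -sum_boole, Fin.sum_univ_succ, hab, hab.symm, hac.symm, hbc.symm,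
    Nat.descFactorial_succ]
  ring

theorem card_filter_comp_eq_mul_descFactorial {m : ℕ} {p : Fin m → α} (hp : p.Injective)
    (x : Fin m → κ) :
    #{L ∈ labelingsOf α N | L ∘ p = x} * (Fintype.card α).descFactorial m =
      #(labelingsOf α N) * ∏ s, (N s).descFactorial #{i | x i = s} := by
  induction m with
  | zero =>
    have hx : ∀ L : α → κ, L ∘ p = x := fun L => Subsingleton.elim _ _
    simp [hx]
  | succ m ih =>
    obtain ⟨a, p, rfl⟩ : ∃ a p, _ = Fin.cons a p := ⟨_, _, (Fin.cons_self_tail p).symm⟩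
    obtain ⟨s, x, rfl⟩ : ∃ s x, _ = Fin.cons s x := ⟨_, _, (Fin.cons_self_tail x).symm⟩
    rw [Fin.cons_injective_iff] at hp
    have hfilter : {L ∈ labelingsOf α N | L ∘ Fin.cons a p = Fin.cons s x} =
        {L ∈ {L ∈ labelingsOf α N | L ∘ p = x} | L a = s} := by
      ext L
      simp only [mem_filter, Fin.comp_cons, Fin.cons_inj]
      tauto
    calc #{L ∈ labelingsOf α N | L ∘ Fin.cons a p = Fin.cons s x} *
          (Fintype.card α).descFactorial (m + 1)
        = #{L ∈ {L ∈ labelingsOf α N | L ∘ p = x} | L a = s} * (Fintype.card α - m) *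
            (Fintype.card α).descFactorial m := by
          rw [hfilter, Nat.descFactorial_succ, mul_assoc]
      _ = (N s - #{i | x i = s}) *
            (#{L ∈ labelingsOf α N | L ∘ p = x} * (Fintype.card α).descFactorial m) := by
          rw [card_filter_apply_mul_card_compl_range hp.2 x hp.1 s]
          ring
      _ = _ := by
          rw [ih hp.2, prod_descFactorial_card_filter_cons]
          ring

end Labelings

section Matching

variable {I K : ℕ}

theorem ep1_ne_ep2 (j j' : Fin I) : ep1 j ≠ ep2 j' := by
  simp only [ep1, ep2, ne_eq, Fin.mk.injEq]
  omega

theorem ep1_injective : (ep1 : Fin I → Fin (2 * I)).Injective := by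
  intro j j' h
  simp only [ep1, Fin.mk.injEq] at h
  omega

theorem ep2_injective : (ep2 : Fin I → Fin (2 * I)).Injective := by
  intro j j' h
  simp only [ep2, Fin.mk.injEq] at h
  omega

theorem injective_vecCons_ep {j j' : Fin I} (h : j ≠ j') :
    (![ep1 j, ep2 j, ep1 j', ep2 j'] : Fin 4 → Fin (2 * I)).Injective := by
  have h1 := ep1_injective.ne h
  have h2 := ep2_injective.ne h
  intro i k hik
  fin_cases i <;> fin_cases k <;>
    simp_all [ep1_ne_ep2, (ep1_ne_ep2 _ _).symm, Ne.symm h1, Ne.symm h2]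

variable {Nc : Fin K → ℕ} {s₁ s₂ s₃ : Fin K}

theorem card_filter_crossPairs_mul_descFactorial (h12 : s₁ ≠ s₂) (h13 : s₁ ≠ s₃)
    (h23 : s₂ ≠ s₃) {j j' : Fin I} (hj : j ≠ j') :
    #{L ∈ labelings I K Nc | ({L (ep1 j), L (ep2 j)} : Finset (Fin K)) = {s₁, s₂} ∧
        ({L (ep1 j'), L (ep2 j')} : Finset (Fin K)) = {s₁, s₃}} * (2 * I).descFactorial 4 =
      4 * (#(labelings I K Nc) * ((Nc s₁).descFactorial 2 * Nc s₂ * Nc s₃)) := by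
  have h1 := ep1_injective.ne hj
  have h2 := ep2_injective.ne hj
  rw [labelings_eq_labelingsOf]
  set Lab := labelingsOf (Fin (2 * I)) Nc
  have hcount : #{L ∈ Lab | ({L (ep1 j), L (ep2 j)} : Finset (Fin K)) = {s₁, s₂} ∧
      ({L (ep1 j'), L (ep2 j')} : Finset (Fin K)) = {s₁, s₃}} =
        4 * #{L ∈ Lab | L ∘ ![ep1 j, ep2 j, ep1 j', ep2 j'] = ![s₁, s₂, s₁, s₃]} := by
    calc _ = #{L ∈ {L ∈ Lab | ({L (ep1 j'), L (ep2 j')} : Finset (Fin K)) = {s₁, s₃}} |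
            ({L (ep1 j), L (ep2 j)} : Finset (Fin K)) = {s₁, s₂}} := by
          rw [filter_filter]
          simp_rw [and_comm]
      _ = 2 * #{L ∈ {L ∈ Lab | L (ep1 j) = s₁ ∧ L (ep2 j) = s₂} |
            ({L (ep1 j'), L (ep2 j')} : Finset (Fin K)) = {s₁, s₃}} := by
          rw [card_filter_pair_eq_pair _ h12, filter_filter, filter_filter]
          · simp_rw [and_comm]
          · refine comp_swap_mem_filter_labelingsOf fun L => ?_
            simp only [Function.comp_apply]
            rw [Equiv.swap_apply_of_ne_of_ne (Ne.symm h1) (ep1_ne_ep2 j' j),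
              Equiv.swap_apply_of_ne_of_ne (ep1_ne_ep2 j j').symm (Ne.symm h2)]
      _ = 4 * #{L ∈ {L ∈ Lab | L (ep1 j) = s₁ ∧ L (ep2 j) = s₂} |
            L (ep1 j') = s₁ ∧ L (ep2 j') = s₃} := by
          rw [card_filter_pair_eq_pair _ h13]
          · ring
          · refine comp_swap_mem_filter_labelingsOf fun L => ?_
            simp only [Function.comp_apply]
            rw [Equiv.swap_apply_of_ne_of_ne h1 (ep1_ne_ep2 j j'),
              Equiv.swap_apply_of_ne_of_ne (ep1_ne_ep2 j' j).symm h2]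
      _ = _ := by
          rw [filter_filter]
          congr 2
          ext L
          simp [funext_iff, Fin.forall_fin_succ, and_assoc]
  have hprob := card_filter_comp_eq_mul_descFactorial (N := Nc) (injective_vecCons_ep hj)
    ![s₁, s₂, s₁, s₃]
  rw [Fintype.card_fin, prod_descFactorial_card_filter_abac _ h12 h13 h23] at hprob
  rw [hcount, mul_assoc]
  exact congrArg (4 * ·) hprob

theorem sum_crossCount_mul_crossCount (hN : 4 ≤ 2 * I) (h12 : s₁ ≠ s₂) (h13 : s₁ ≠ s₃)
    (h23 : s₂ ≠ s₃) :
    (∑ L ∈ labelings I K Nc, crossCount I K L s₁ s₂ * crossCount I K L s₁ s₃) *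
        ((2 * I - 1) * (2 * I - 3)) =
      #(labelings I K Nc) * ((Nc s₁).descFactorial 2 * Nc s₂ * Nc s₃) := by
  obtain ⟨k, rfl⟩ : ∃ k, I = k + 2 := ⟨I - 2, by omega⟩
  have hdesc : (2 * (k + 2)).descFactorial 4 =
      4 * ((k + 2) * (k + 1)) * ((2 * (k + 2) - 1) * (2 * (k + 2) - 3)) := by
    rw [show 2 * (k + 2) = 2 * k + 4 by ring]
    simp [Nat.descFactorial_succ]
    ring
  have hdiag : ∀ j : Fin (k + 2), #{L ∈ labelings (k + 2) K Nc |
      ({L (ep1 j), L (ep2 j)} : Finset (Fin K)) = {s₁, s₂} ∧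
        ({L (ep1 j), L (ep2 j)} : Finset (Fin K)) = {s₁, s₃}} = 0 := by
    refine fun j => card_eq_zero.2 (filter_eq_empty_iff.2 fun L _ ⟨h, h'⟩ => ?_)
    rw [h, pair_eq_pair_iff] at h'
    tauto
  apply Nat.eq_of_mul_eq_mul_left (show 0 < 4 * ((k + 2) * (k + 1)) by positivity)
  calc _ = (∑ L ∈ labelings (k + 2) K Nc,
          crossCount (k + 2) K L s₁ s₂ * crossCount (k + 2) K L s₁ s₃) *
            (2 * (k + 2)).descFactorial 4 := by
        rw [hdesc]
        ring
    _ = ∑ j, ∑ j', #{L ∈ labelings (k + 2) K Nc |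
          ({L (ep1 j), L (ep2 j)} : Finset (Fin K)) = {s₁, s₂} ∧
            ({L (ep1 j'), L (ep2 j')} : Finset (Fin K)) = {s₁, s₃}} *
              (2 * (k + 2)).descFactorial 4 := by
        simp only [crossCount]
        rw [sum_card_filter_mul_card_filter, sum_mul]
        simp_rw [sum_mul]
    _ = ∑ j : Fin (k + 2), (k + 1) * (4 * (#(labelings (k + 2) K Nc) *
          ((Nc s₁).descFactorial 2 * Nc s₂ * Nc s₃))) := by
        refine sum_congr rfl fun j _ => ?_
        rw [← add_sum_erase _ _ (mem_univ j), hdiag, zero_mul, zero_add,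
          sum_congr rfl fun j' hj' =>
            card_filter_crossPairs_mul_descFactorial h12 h13 h23 (ne_of_mem_erase hj').symm,
          sum_const, card_erase_of_mem (mem_univ _), card_univ, Fintype.card_fin, smul_eq_mul]
        rfl
    _ = _ := by
        rw [sum_const, card_univ, Fintype.card_fin, smul_eq_mul]
        ring

end Matching

theorem stmt6_general (K I : ℕ) (hN : 4 ≤ 2 * I)
    (Nc : Fin K → ℕ) (hNsum : ∑ s, Nc s = 2 * I)
    (s₁ s₂ s₃ : Fin K) (h12 : s₁ ≠ s₂) (h13 : s₁ ≠ s₃) (h23 : s₂ ≠ s₃) :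
    expct I K Nc (fun L => (crossCount I K L s₁ s₂ : ℝ) * (crossCount I K L s₁ s₃ : ℝ))
      = (Nc s₁ : ℝ) * ((Nc s₁ : ℝ) - 1) * (Nc s₂ : ℝ) * (Nc s₃ : ℝ)
          / (((2 * I : ℝ) - 1) * ((2 * I : ℝ) - 3)) := by
  have hcount := sum_crossCount_mul_crossCount (Nc := Nc) hN h12 h13 h23
  have hLab : (#(labelings I K Nc) : ℝ) ≠ 0 := by
    rw [labelings_eq_labelingsOf]
    exact_mod_cast (labelingsOf_nonempty (by simpa using hNsum)).card_pos.ne'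
  have hden : ((2 * I : ℝ) - 1) * ((2 * I : ℝ) - 3) ≠ 0 := by
    have : (4 : ℝ) ≤ 2 * I := by exact_mod_cast hN
    exact mul_ne_zero (by linarith) (by linarith)
  rw [expct, div_eq_div_iff hLab hden]
  have hcast := congrArg (Nat.cast : ℕ → ℝ) hcount
  push_cast [Nat.cast_sub (show 1 ≤ 2 * I by omega), Nat.cast_sub (show 3 ≤ 2 * I by omega),
    Nat.cast_descFactorial_two] at hcast
  linear_combination hcast

/-- null product moment `E[a_{s₁s₂} a_{s₁s₃}]` for pairwise distinct
`s₁, s₂, s₃` and `N ≥ 4`. -/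
theorem stmt6 (K I : ℕ) (hK : 3 ≤ K) (hI : 1 ≤ I) (hN : 4 ≤ 2 * I)
    (Nc : Fin K → ℕ) (hNpos : ∀ s, 0 < Nc s) (hNsum : ∑ s, Nc s = 2 * I)
    (s₁ s₂ s₃ : Fin K) (h12 : s₁ ≠ s₂) (h13 : s₁ ≠ s₃) (h23 : s₂ ≠ s₃) :
    expct I K Nc (fun L => (crossCount I K L s₁ s₂ : ℝ) * (crossCount I K L s₁ s₃ : ℝ))
      = (Nc s₁ : ℝ) * ((Nc s₁ : ℝ) - 1) * (Nc s₂ : ℝ) * (Nc s₃ : ℝ)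
          / (((2 * I : ℝ) - 1) * ((2 * I : ℝ) - 3)) :=
  stmt6_general K I hN Nc hNsum s₁ s₂ s₃ h12 h13 h23

end Crossmatch
end
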